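/- arXiv:1007.1694 — 2 statements merged into one kernel-verified Lean document; each statement's English description precedes it below -/
import Mathlib

section
/- Let Γ be a consistent counter machine with m states, let (y,z) be a Skorokhod solution of the associated problem with z(0) = z^{i⁰,C⁰₁,C⁰₂}, let t ∈ ℕ, and suppose z(5t) = z^{i,C₁,C₂} where (i,C₁,C₂) = (i^t,C^t₁,C^t₂) is the configuration of the trajectory at time t. Then on the interval (5t, 5t+1): y_{A,1} and y_{B,i} are active at unit rate; for k = 1,2, y_{C,k} is active at unit rate if C_k = 0 and passive if C_k > 0; all remaining y-coordinates are passive. Moreover z(5t+1) is given by: z_A(5t+1) = (0,0,1,1,1); z_{B,j}(5t+1) = 0 for all j = 1,…,m; z_{C,k}(5t+1) = C_k − 1 + 1{C_k = 0} for k = 1,2; z_{D,k}(5t+1) = 1{C_k = 0} for k = 1,2; z_{E,(i′,b,c)}(5t+1) = 3 + Υ(i′,b,c) and z_{F,(i′,b,c)}(5t+1) = 4 + Υ(i′,b,c) for all (i′,b,c), where Υ(i′,b,c) = −b−c+(2b−1)·1{C₁=0}+(2c−1)·1{C₂=0}−1{i′=i}. -/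
open scoped BigOperators

/-- A Skorokhod solution for the matrix `R` and input path `x`:
continuous `y, z` on `[0,∞)` with `z = x + R y`, `z ≥ 0`, `y 0 = 0`,
each `y j` nondecreasing, and `y j` does not increase while `z j > 0`
(the Lebesgue–Stieltjes measure of `y j` vanishes on `{s | z s j > 0}`). -/
def IsSkorokhodSolution {n : Type*} [Fintype n] (R : Matrix n n ℝ)
    (x y z : ℝ → n → ℝ) : Prop :=
  ContinuousOn y (Set.Ici 0) ∧
  ContinuousOn z (Set.Ici 0) ∧
  (∀ t : ℝ, 0 ≤ t → z t = x t + R.mulVec (y t)) ∧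
  (∀ t : ℝ, 0 ≤ t → ∀ j, 0 ≤ z t j) ∧
  (y 0 = 0) ∧
  (∀ j, MonotoneOn (fun t => y t j) (Set.Ici 0)) ∧
  (∀ j, ∀ s₁ s₂ : ℝ, 0 ≤ s₁ → s₁ ≤ s₂ →
      (∀ s ∈ Set.Ioo s₁ s₂, 0 < z s j) → y s₂ j = y s₁ j)

/-- `R` is an S-matrix: some nonnegative `w` with `R w > 0` componentwise. -/
def IsSMatrix {n : Type*} [Fintype n] (R : Matrix n n ℝ) : Prop :=
  ∃ w : n → ℝ, (∀ i, 0 ≤ w i) ∧ (∀ i, 0 < R.mulVec w i)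

/-- `R` is completely-S: every (nonempty) principal submatrix is an S-matrix. -/
def IsCompletelyS {n : Type*} [Fintype n] [DecidableEq n] (R : Matrix n n ℝ) : Prop :=
  ∀ I : Finset n, I.Nonempty →
    IsSMatrix (R.submatrix (fun a : I => (a : n)) (fun a : I => (a : n)))

/-- Stability of the fluid model `(z₀, θ, R)`: every Skorokhod solution for
`x t = z₀ + θ t` satisfies `z t → 0` as `t → ∞`. -/
def FluidStable {n : Type*} [Fintype n] (z0 θv : n → ℝ) (R : Matrix n n ℝ) : Prop :=
  ∀ y z : ℝ → n → ℝ,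
    IsSkorokhodSolution R (fun t i => z0 i + θv i * t) y z →
    Filter.Tendsto z Filter.atTop (nhds 0)

/-- `f` is active at rate `r` on `(s₁, s₂)`. -/
def ActiveAtRate (f : ℝ → ℝ) (r s₁ s₂ : ℝ) : Prop :=
  ∀ s ∈ Set.Ioo s₁ s₂, f s - f s₁ = r * (s - s₁)

/-- `f` is active at unit rate on `(s₁, s₂)`. -/
def UnitActive (f : ℝ → ℝ) (s₁ s₂ : ℝ) : Prop := ActiveAtRate f 1 s₁ s₂

/-- `f` is passive (constant) on `(s₁, s₂)`. -/
def Passive (f : ℝ → ℝ) (s₁ s₂ : ℝ) : Prop := ∀ s ∈ Set.Ioo s₁ s₂, f s = f s₁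

/-- A counter machine with `m` states: update map with moves in
`{(-1,0),(0,-1),(0,0),(1,0),(0,1)}`, never decrementing a zero counter. -/
structure CounterMachine (m : ℕ) where
  Γ : Fin m → Bool → Bool → Fin m × ℤ × ℤ
  moves : ∀ i b c, ((Γ i b c).2.1, (Γ i b c).2.2) ∈
      ({(-1,0), (0,-1), (0,0), (1,0), (0,1)} : Set (ℤ × ℤ))
  consistent : ∀ i b c, (b = false → 0 ≤ (Γ i b c).2.1) ∧ (c = false → 0 ≤ (Γ i b c).2.2)

/-- One step of the counter machine on a configuration. -/
def CounterMachine.step {m : ℕ} (M : CounterMachine m) :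
    Fin m × ℕ × ℕ → Fin m × ℕ × ℕ := fun cfg =>
  let r := M.Γ cfg.1 (decide (0 < cfg.2.1)) (decide (0 < cfg.2.2))
  (r.1, ((cfg.2.1 : ℤ) + r.2.1).toNat, ((cfg.2.2 : ℤ) + r.2.2).toNat)

/-- Index set of the associated Skorokhod problem: groups A (5), B (m), C (2),
D (2), E (4m), F (4m); total dimension 5m + 9. -/
inductive Idx (m : ℕ) where
  | A : Fin 5 → Idx m
  | B : Fin m → Idx m
  | C : Fin 2 → Idx m
  | D : Fin 2 → Idx m
  | E : Fin m → Bool → Bool → Idx m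
  | F : Fin m → Bool → Bool → Idx m
  deriving DecidableEq, Fintype

/-- Numeric value of a bit. -/
def bnum (b : Bool) : ℝ := if b then 1 else 0

/-- Real indicator of a decidable proposition. -/
def indC (P : Prop) [Decidable P] : ℝ := if P then 1 else 0

/-- The 5×5 block AA. -/
def AAmat : Matrix (Fin 5) (Fin 5) ℝ :=
  !![1,2,1,1,0; 0,1,2,1,1; 1,0,1,2,1; 1,1,0,1,2; 2,1,1,0,1]

/-- The reflection matrix `R` associated with the counter machine `M`. -/
def Rmat {m : ℕ} (M : CounterMachine m) : Matrix (Idx m) (Idx m) ℝ :=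
  fun p q => match p, q with
  | .A k, .A l => AAmat k l
  | .B _, .A l => if l = 0 then -1 else 0
  | .B j, .B j' => if j' = j then 1 else 0
  | .B j, .E i b c => if (M.Γ i b c).1 = j then 0 else 1
  | .C _, .A l => if l = 0 ∨ l = 3 then -1 else 0
  | .C k, .C k' => if k' = k then 1 else 0
  | .C k, .D k' => if k' = k then 1 else 0
  | .C k, .E i b c =>
      (if k = 0 then ((M.Γ i b c).2.1 : ℝ) else ((M.Γ i b c).2.2 : ℝ)) + 1
  | .D _, .A l => if l = 1 then -1 else 0
  | .D k, .C k' => if k' = k then 1 else 0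
  | .D k, .D k' => if k' = k then 1 else 0
  | .E _ b c, .A l => if l = 0 then -(bnum b) - bnum c else if l = 2 then -1 else 0
  | .E i _ _, .B j => if j = i then -1 else 0
  | .E _ b c, .C k => if k = 0 then 2 * bnum b - 1 else 2 * bnum c - 1
  | .E i b c, .E i' b' c' => if i' = i ∧ b' = b ∧ c' = c then 1 else 0
  | .E i b c, .F i' b' c' => if i' = i ∧ b' = b ∧ c' = c then 1 else 0
  | .F _ b c, .A l => if l = 0 then -(bnum b) - bnum c
      else if l = 2 then -1 else if l = 3 then -4 else if l = 4 then 4 else 0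
  | .F i _ _, .B j => if j = i then -1 else 0
  | .F _ b c, .C k => if k = 0 then 2 * bnum b - 1 else 2 * bnum c - 1
  | .F i b c, .E i' b' c' => if i' = i ∧ b' = b ∧ c' = c then 1 else 0
  | .F i b c, .F i' b' c' => if i' = i ∧ b' = b ∧ c' = c then 1 else 0
  | _, _ => 0

/-- The modified reflection matrix `R*` with halting state `i*`. -/
def RmatStar {m : ℕ} (M : CounterMachine m) (istar : Fin m) :
    Matrix (Idx m) (Idx m) ℝ :=
  fun p q => match p, q with
  | .A k, .B j => if j = istar ∧ (k = 2 ∨ k = 3 ∨ k = 4) then -1 else 0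
  | .E i b c, .B j =>
      if j = istar then -3 + bnum b + bnum c else if j = i then -1 else 0
  | .F i b c, .B j =>
      if j = istar then -4 + bnum b + bnum c else if j = i then -1 else 0
  | p, q => Rmat M p q

/-- The drift vector θ: −1 on the A-coordinates and 0 elsewhere. -/
def thetaVec (m : ℕ) : Idx m → ℝ := fun p => match p with
  | .A _ => -1
  | _ => 0

/-- The encoding `z^{i,C₁,C₂}` of a configuration as a state of the
Skorokhod problem. -/
def encCfg {m : ℕ} (i : Fin m) (C₁ C₂ : ℕ) : Idx m → ℝ := fun p => match p with
  | .A k => if k = 0 ∨ k = 4 then 0 else 1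
  | .B j => if j = i then 0 else 1
  | .C k => if k = 0 then (C₁ : ℝ) else (C₂ : ℝ)
  | .D _ => 0
  | .E _ _ _ => 3
  | .F _ _ _ => 4

/-- The linear input path `x t = z^{i,C₁,C₂} + θ t`. -/
def fluidX {m : ℕ} (i : Fin m) (C₁ C₂ : ℕ) : ℝ → Idx m → ℝ :=
  fun t p => encCfg i C₁ C₂ p + thetaVec m p * t

/-- The quantity Υ(i′,b,c) of the paper (for current configuration (i,C₁,C₂)). -/
def Upsilon {m : ℕ} (i : Fin m) (C₁ C₂ : ℕ) (i' : Fin m) (b c : Bool) : ℝ :=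
  -(bnum b) - bnum c + (2 * bnum b - 1) * indC (C₁ = 0)
    + (2 * bnum c - 1) * indC (C₂ = 0) - indC (i' = i)

/-!
After shifting time by `5t`, the solution starts from `z^{i,C₁,C₂}` and it suffices to follow it
on `[0, 1]`. Each row of `R` has few negative entries, so the coordinates can be settled one after
another. If the negative entries of a row only meet coordinates already known to be passive or
to grow at rate at most one, the corresponding `z` stays positive and the coordinate is passive by
complementarity. If `z_j` is positive whenever `y_j` is ahead of the line `r s`, then `y_j` never
gets ahead, since it cannot grow during an excursion of `z_j` above zero; together with `z ≥ 0`
this gives rate exactly one for `y_{A,1}`, `y_{B,i}` and the `y_{C,k}` of empty counters. Hence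
`y(s) = s v` on `[0, 1]` for the vector `v = activeRates` of rates, and `z(1) = z(0) + θ + R v`.
-/

open Set

theorem ContinuousOn.nonpos_of_excursion_antitone {f : ℝ → ℝ} {a b : ℝ}
    (hf : ContinuousOn f (Icc a b)) (ha : f a ≤ 0)
    (hexc : ∀ s₁ ∈ Icc a b, ∀ s₂ ∈ Icc a b, s₁ ≤ s₂ →
      (∀ s ∈ Ioo s₁ s₂, 0 < f s) → f s₂ ≤ f s₁) :
    ∀ s ∈ Icc a b, f s ≤ 0 := by
  intro s hs
  by_contra! hfs
  have hclosed : IsClosed (Icc a s ∩ f ⁻¹' Iic 0) :=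
    (hf.mono (Icc_subset_Icc_right hs.2)).preimage_isClosed_of_isClosed isClosed_Icc isClosed_Iic
  obtain ⟨c, ⟨⟨hac, hcs⟩, hfc⟩, hcmax⟩ :=
    (isCompact_Icc.of_isClosed_subset hclosed inter_subset_left).exists_isGreatest
      ⟨a, ⟨le_rfl, hs.1⟩, ha⟩
  have hpos : ∀ r ∈ Ioo c s, 0 < f r := fun r hr => by
    by_contra! hfr
    exact (hr.1.trans_le (hcmax ⟨⟨hac.trans hr.1.le, hr.2.le⟩, hfr⟩)).false
  linarith [hexc c ⟨hac, hcs.trans hs.2⟩ s hs hcs hpos, show f c ≤ 0 from hfc]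

theorem activeAtRate_of_forall_Icc {f : ℝ → ℝ} {r T : ℝ}
    (hf : ∀ s ∈ Icc (0 : ℝ) 1, f (T + s) - f T = s * r) : ActiveAtRate f r T (T + 1) := by
  intro s hs
  have hfs := hf (s - T) ⟨by linarith [hs.1], by linarith [hs.2]⟩
  rwa [add_sub_cancel, mul_comm] at hfs

theorem ActiveAtRate.passive {f : ℝ → ℝ} {s₁ s₂ : ℝ} (h : ActiveAtRate f 0 s₁ s₂) :
    Passive f s₁ s₂ :=
  fun s hs => by simpa [sub_eq_zero] using h s hs

namespace IsSkorokhodSolution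

variable {n : Type*} [Fintype n] {R : Matrix n n ℝ} {x y z : ℝ → n → ℝ}

theorem shift (h : IsSkorokhodSolution R x y z) {T : ℝ} (hT : 0 ≤ T) :
    IsSkorokhodSolution R (fun s => z T + (x (T + s) - x T)) (fun s => y (T + s) - y T)
      (fun s => z (T + s)) := by
  obtain ⟨hy, hz, heq, hnn, -, hmono, hcompl⟩ := h
  have hmaps : MapsTo (T + ·) (Ici 0) (Ici 0) := fun s hs => by
    simp only [mem_Ici] at hs ⊢; linarith
  have hcont : ContinuousOn (T + ·) (Ici (0 : ℝ)) := (continuous_const_add T).continuousOn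
  refine ⟨(hy.comp hcont hmaps).sub continuousOn_const, hz.comp hcont hmaps, ?_,
    fun s hs => hnn _ (by linarith), by simp, ?_, ?_⟩
  · intro s hs
    dsimp only
    rw [heq (T + s) (by linarith), heq T hT, Matrix.mulVec_sub]
    abel
  · intro j a ha b hb hab
    exact sub_le_sub_right (hmono j (hmaps ha) (hmaps hb) (by simpa using hab)) _
  · intro j s₁ s₂ hs₁ hs₁₂ hpos
    refine congrArg (· - y T j) (hcompl j _ _ (by linarith) (by linarith) fun s hs => ?_)
    simpa using hpos (s - T) ⟨by linarith [hs.1], by linarith [hs.2]⟩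

theorem apply_eq (h : IsSkorokhodSolution R x y z) {s : ℝ} (hs : 0 ≤ s) :
    z s = x s + R.mulVec (y s) :=
  h.2.2.1 s hs

theorem z_nonneg (h : IsSkorokhodSolution R x y z) {s : ℝ} (hs : 0 ≤ s) (j : n) : 0 ≤ z s j :=
  h.2.2.2.1 s hs j

theorem y_nonneg (h : IsSkorokhodSolution R x y z) {s : ℝ} (hs : 0 ≤ s) (j : n) : 0 ≤ y s j := by
  obtain ⟨-, -, -, -, hy0, hmono, -⟩ := h
  simpa [hy0] using hmono j self_mem_Ici (mem_Ici.mpr hs) hs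

theorem eq_zero_of_pos (h : IsSkorokhodSolution R x y z) {j : n} {S : ℝ}
    (hpos : ∀ s ∈ Ioo 0 S, 0 < z s j) : ∀ s ∈ Icc 0 S, y s j = 0 := by
  intro s hs
  obtain ⟨-, -, -, -, hy0, -, hcompl⟩ := h
  rw [hcompl j 0 s le_rfl hs.1 fun r hr => hpos r ⟨hr.1, hr.2.trans_le hs.2⟩, hy0]
  rfl

theorem le_mul_of_pos (h : IsSkorokhodSolution R x y z) {j : n} {r S : ℝ} (hr : 0 ≤ r)
    (hpos : ∀ s ∈ Ioc 0 S, r * s < y s j → 0 < z s j) : ∀ s ∈ Icc 0 S, y s j ≤ r * s := by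
  have hnonpos : ∀ s ∈ Icc 0 S, y s j - r * s ≤ 0 := by
    obtain ⟨hy, -, -, -, hy0, -, hcompl⟩ := h
    refine ContinuousOn.nonpos_of_excursion_antitone ?_ (by simp [hy0]) ?_
    · exact ((continuous_apply j).comp_continuousOn (hy.mono Icc_subset_Ici_self)).sub
        (continuous_const.mul continuous_id).continuousOn
    · intro s₁ hs₁ s₂ hs₂ hs₁₂ hexc
      have hflat : y s₂ j = y s₁ j := hcompl j s₁ s₂ hs₁.1 hs₁₂ fun s hs =>
        hpos s ⟨hs₁.1.trans_lt hs.1, hs.2.le.trans hs₂.2⟩ (by linarith [hexc s hs])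
      rw [hflat]
      linarith [mul_le_mul_of_nonneg_left hs₁₂ hr]
  exact fun s hs => by linarith [hnonpos s hs]

end IsSkorokhodSolution

theorem IsSkorokhodSolution.shift_fluidX {m : ℕ} {R : Matrix (Idx m) (Idx m) ℝ}
    {i0 i : Fin m} {C₁0 C₂0 C₁ C₂ : ℕ} {y z : ℝ → Idx m → ℝ}
    (h : IsSkorokhodSolution R (fluidX i0 C₁0 C₂0) y z) {T : ℝ}
    (hT : 0 ≤ T) (hz : z T = encCfg i C₁ C₂) :
    IsSkorokhodSolution R (fluidX i C₁ C₂) (fun s => y (T + s) - y T) (fun s => z (T + s)) := by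
  convert h.shift hT using 1
  funext s p
  simp [fluidX, hz]
  ring

theorem CounterMachine.neg_one_le_moves {m : ℕ} (M : CounterMachine m) (i : Fin m) (b c : Bool) :
    -1 ≤ (M.Γ i b c).2.1 ∧ -1 ≤ (M.Γ i b c).2.2 := by
  have h := M.moves i b c
  simp only [Set.mem_insert_iff, Set.mem_singleton_iff, Prod.mk.injEq] at h
  omega

/- Coordinates are 0-indexed: `.A k` is the paper's `A_{k+1}`, and `.C k` is `C_{k+1}`. -/

def negCols {m : ℕ} : Idx m → Finset (Idx m)
  | .A _ => ∅
  | .B _ => {.A 0}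
  | .C _ => {.A 0, .A 3}
  | .D _ => {.A 1}
  | .E i _ _ => {.A 0, .A 2, .B i, .C 0, .C 1}
  | .F i _ _ => {.A 0, .A 2, .A 3, .B i, .C 0, .C 1}

theorem Rmat_nonneg {m : ℕ} (M : CounterMachine m) {p q : Idx m} (hq : q ∉ negCols p) :
    0 ≤ Rmat M p q := by
  rcases p with k | j | k | k | ⟨i, b, c⟩ | ⟨i, b, c⟩ <;>
    rcases q with l | j' | k' | k' | ⟨i', b', c'⟩ | ⟨i', b', c'⟩ <;>
    simp [negCols, Rmat] at hq ⊢
  case A.A => fin_cases k <;> fin_cases l <;> simp [AAmat]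
  case C.E =>
    obtain ⟨h₁, h₂⟩ := M.neg_one_le_moves i' b' c'
    have h₁' : (-1 : ℝ) ≤ (M.Γ i' b' c').2.1 := by exact_mod_cast h₁
    have h₂' : (-1 : ℝ) ≤ (M.Γ i' b' c').2.2 := by exact_mod_cast h₂
    split_ifs <;> linarith
  all_goals split_ifs <;> first | omega | simp_all

def activeRates {m : ℕ} (i : Fin m) (C₁ C₂ : ℕ) : Idx m → ℝ :=
  Pi.single (.A 0) 1 + Pi.single (.B i) 1 + Pi.single (.C 0) (indC (C₁ = 0))
    + Pi.single (.C 1) (indC (C₂ = 0))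

theorem Rmat_mulVec_activeRates {m : ℕ} (M : CounterMachine m) (i : Fin m) (C₁ C₂ : ℕ)
    (p : Idx m) :
    (Rmat M).mulVec (activeRates i C₁ C₂) p = Rmat M p (.A 0) + Rmat M p (.B i)
      + Rmat M p (.C 0) * indC (C₁ = 0) + Rmat M p (.C 1) * indC (C₂ = 0) := by
  simp [activeRates, Matrix.mulVec_add, mul_comm]

namespace IsSkorokhodSolution

variable {m : ℕ} {M : CounterMachine m} {i : Fin m} {C₁ C₂ : ℕ} {y z : ℝ → Idx m → ℝ}

theorem apply_fluidX (h : IsSkorokhodSolution (Rmat M) (fluidX i C₁ C₂) y z) {s : ℝ}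
    (hs : 0 ≤ s) (p : Idx m) :
    z s p = encCfg i C₁ C₂ p + thetaVec m p * s + ∑ q, Rmat M p q * y s q := by
  simp [h.apply_eq hs, fluidX, Matrix.mulVec, dotProduct]

theorem sum_le_apply_fluidX (h : IsSkorokhodSolution (Rmat M) (fluidX i C₁ C₂) y z) {s : ℝ}
    (hs : 0 ≤ s) (p : Idx m) {K : Finset (Idx m)} (hK : negCols p ⊆ K) :
    encCfg i C₁ C₂ p + thetaVec m p * s + ∑ q ∈ K, Rmat M p q * y s q ≤ z s p := by
  rw [h.apply_fluidX hs p]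
  have hsum : ∑ q ∈ K, Rmat M p q * y s q ≤ ∑ q, Rmat M p q * y s q :=
    Finset.sum_le_sum_of_subset_of_nonneg K.subset_univ fun q _ hq =>
      mul_nonneg (Rmat_nonneg M fun hq' => hq (hK hq')) (h.y_nonneg hs q)
  linarith

theorem yA_eq_zero (h : IsSkorokhodSolution (Rmat M) (fluidX i C₁ C₂) y z) {k : Fin 5}
    (hk0 : k ≠ 0) (hk4 : k ≠ 4) : ∀ s ∈ Icc (0 : ℝ) 1, y s (.A k) = 0 :=
  h.eq_zero_of_pos fun s hs => by
    have hz := h.sum_le_apply_fluidX hs.1.le (.A k) (K := ∅) (by simp [negCols])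
    simp [encCfg, thetaVec, hk0, hk4] at hz
    linarith [hs.2]

theorem yA0_eq (h : IsSkorokhodSolution (Rmat M) (fluidX i C₁ C₂) y z) :
    ∀ s ∈ Icc (0 : ℝ) 1, y s (.A 0) = s := by
  have hle : ∀ s ∈ Icc (0 : ℝ) 1, y s (.A 0) ≤ 1 * s :=
    h.le_mul_of_pos zero_le_one fun s hs hlt => by
      have hz := h.sum_le_apply_fluidX hs.1.le (.A 0) (K := {.A 0}) (by simp [negCols])
      simp [encCfg, thetaVec, Rmat, AAmat] at hz
      linarith
  intro s hs
  have hrow : ∑ q, Rmat M (.A 0) q * y s q = y s (.A 0) := by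
    rw [Fintype.sum_eq_single (.A 0) fun q hq => ?_]
    · simp [Rmat, AAmat]
    rcases q with l | _ | _ | _ | _ | _
    · fin_cases l
      · exact absurd rfl hq
      all_goals simp [Rmat, AAmat, h.yA_eq_zero _ _ s hs]
    all_goals simp [Rmat]
  have hz := h.apply_fluidX hs.1 (.A 0)
  rw [hrow] at hz
  simp [encCfg, thetaVec] at hz
  linarith [hle s hs, h.z_nonneg hs.1 (.A 0)]

theorem yA4_eq_zero (h : IsSkorokhodSolution (Rmat M) (fluidX i C₁ C₂) y z) :
    ∀ s ∈ Icc (0 : ℝ) 1, y s (.A 4) = 0 :=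
  h.eq_zero_of_pos fun s hs => by
    have hz := h.sum_le_apply_fluidX hs.1.le (.A 4) (K := {.A 0}) (by simp [negCols])
    simp [encCfg, thetaVec, Rmat, AAmat, h.yA0_eq s (Ioo_subset_Icc_self hs)] at hz
    linarith [hs.1]

theorem yB_eq_zero_of_ne (h : IsSkorokhodSolution (Rmat M) (fluidX i C₁ C₂) y z) {j : Fin m}
    (hj : j ≠ i) : ∀ s ∈ Icc (0 : ℝ) 1, y s (.B j) = 0 :=
  h.eq_zero_of_pos fun s hs => by
    have hz := h.sum_le_apply_fluidX hs.1.le (.B j) (K := {.A 0}) (by simp [negCols])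
    simp [encCfg, thetaVec, Rmat, hj, h.yA0_eq s (Ioo_subset_Icc_self hs)] at hz
    linarith [hs.2]

theorem yD_eq_zero (h : IsSkorokhodSolution (Rmat M) (fluidX i C₁ C₂) y z) (k : Fin 2) :
    ∀ s ∈ Icc (0 : ℝ) 1, y s (.D k) = 0 := by
  have hle : ∀ s ∈ Icc (0 : ℝ) 1, y s (.D k) ≤ 0 * s :=
    h.le_mul_of_pos le_rfl fun s hs hlt => by
      have hz := h.sum_le_apply_fluidX hs.1.le (.D k) (K := {.A 1, .D k}) (by simp [negCols])
      simp [encCfg, thetaVec, Rmat, h.yA_eq_zero (k := 1) (by decide) (by decide) s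
        (Ioc_subset_Icc_self hs)] at hz
      linarith
  exact fun s hs => le_antisymm (by simpa using hle s hs) (h.y_nonneg hs.1 _)

theorem yC_eq_zero_of_one_le (h : IsSkorokhodSolution (Rmat M) (fluidX i C₁ C₂) y z)
    {k : Fin 2} (hk : 1 ≤ encCfg i C₁ C₂ (.C k)) : ∀ s ∈ Icc (0 : ℝ) 1, y s (.C k) = 0 :=
  h.eq_zero_of_pos fun s hs => by
    have hz := h.sum_le_apply_fluidX hs.1.le (.C k) (K := {.A 0, .A 3}) (by simp [negCols])
    have hs' := Ioo_subset_Icc_self hs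
    simp [thetaVec, Rmat, h.yA0_eq s hs', h.yA_eq_zero (k := 3) (by decide) (by decide) s hs']
      at hz
    linarith [hs.2]

theorem yC_le (h : IsSkorokhodSolution (Rmat M) (fluidX i C₁ C₂) y z) (k : Fin 2) :
    ∀ s ∈ Icc (0 : ℝ) 1, y s (.C k) ≤ s := by
  simpa using h.le_mul_of_pos (j := .C k) zero_le_one fun s hs hlt => by
    have hz := h.sum_le_apply_fluidX hs.1.le (.C k) (K := {.A 0, .A 3, .C k})
      (by simp [negCols])
    have hs' := Ioc_subset_Icc_self hs
    have hC : 0 ≤ encCfg i C₁ C₂ (.C k) := by simp only [encCfg]; split_ifs <;> positivity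
    simp [thetaVec, Rmat, h.yA0_eq s hs', h.yA_eq_zero (k := 3) (by decide) (by decide) s hs']
      at hz
    linarith

theorem yB_le (h : IsSkorokhodSolution (Rmat M) (fluidX i C₁ C₂) y z) (j : Fin m) :
    ∀ s ∈ Icc (0 : ℝ) 1, y s (.B j) ≤ s := by
  obtain rfl | hj := eq_or_ne j i
  · simpa using h.le_mul_of_pos (j := .B j) zero_le_one fun s hs hlt => by
      have hz := h.sum_le_apply_fluidX hs.1.le (.B j) (K := {.A 0, .B j}) (by simp [negCols])
      simp [encCfg, thetaVec, Rmat, h.yA0_eq s (Ioc_subset_Icc_self hs)] at hz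
      linarith
  · exact fun s hs => (h.yB_eq_zero_of_ne hj s hs).trans_le hs.1

theorem neg_three_mul_le_rowEF (h : IsSkorokhodSolution (Rmat M) (fluidX i C₁ C₂) y z) (j : Fin m)
    (b c : Bool) : ∀ s ∈ Icc (0 : ℝ) 1, -3 * s ≤ -(bnum b + bnum c) * s - y s (.B j)
      + (2 * bnum b - 1) * y s (.C 0) + (2 * bnum c - 1) * y s (.C 1) := by
  intro s hs
  have := h.yC_le 0 s hs
  have := h.yC_le 1 s hs
  have := h.yB_le j s hs
  have := h.y_nonneg hs.1 (.C 0)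
  have := h.y_nonneg hs.1 (.C 1)
  cases b <;> cases c <;> simp only [bnum] <;> norm_num <;> linarith

theorem yE_eq_zero (h : IsSkorokhodSolution (Rmat M) (fluidX i C₁ C₂) y z) (j : Fin m)
    (b c : Bool) : ∀ s ∈ Icc (0 : ℝ) 1, y s (.E j b c) = 0 :=
  h.eq_zero_of_pos fun s hs => by
    have hz := h.sum_le_apply_fluidX hs.1.le (.E j b c) subset_rfl
    have hs' := Ioo_subset_Icc_self hs
    simp [negCols, Finset.sum_insert, encCfg, thetaVec, Rmat, h.yA0_eq s hs',
      h.yA_eq_zero (k := 2) (by decide) (by decide) s hs'] at hz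
    linarith [h.neg_three_mul_le_rowEF j b c s hs', hs.2]

theorem yF_eq_zero (h : IsSkorokhodSolution (Rmat M) (fluidX i C₁ C₂) y z) (j : Fin m)
    (b c : Bool) : ∀ s ∈ Icc (0 : ℝ) 1, y s (.F j b c) = 0 :=
  h.eq_zero_of_pos fun s hs => by
    have hz := h.sum_le_apply_fluidX hs.1.le (.F j b c) subset_rfl
    have hs' := Ioo_subset_Icc_self hs
    simp [negCols, Finset.sum_insert, encCfg, thetaVec, Rmat, h.yA0_eq s hs',
      h.yA_eq_zero (k := 2) (by decide) (by decide) s hs',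
      h.yA_eq_zero (k := 3) (by decide) (by decide) s hs'] at hz
    linarith [h.neg_three_mul_le_rowEF j b c s hs', hs.2]

theorem y_eq_zero_of_notMem (h : IsSkorokhodSolution (Rmat M) (fluidX i C₁ C₂) y z)
    {q : Idx m} (hq : q ∉ ({.A 0, .B i, .C 0, .C 1} : Finset (Idx m))) :
    ∀ s ∈ Icc (0 : ℝ) 1, y s q = 0 := by
  simp only [Finset.mem_insert, Finset.mem_singleton, not_or] at hq
  rcases q with k | j | k | k | ⟨j, b, c⟩ | ⟨j, b, c⟩
  · obtain rfl | hk4 := eq_or_ne k 4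
    · exact h.yA4_eq_zero
    · exact h.yA_eq_zero (by simpa using hq.1) hk4
  · exact h.yB_eq_zero_of_ne (by simpa using hq.2.1)
  · fin_cases k <;> simp at hq
  · exact h.yD_eq_zero k
  · exact h.yE_eq_zero j b c
  · exact h.yF_eq_zero j b c

theorem apply_eq_sum_active (h : IsSkorokhodSolution (Rmat M) (fluidX i C₁ C₂) y z) {s : ℝ}
    (hs : s ∈ Icc (0 : ℝ) 1) (p : Idx m) :
    z s p = encCfg i C₁ C₂ p + thetaVec m p * s
      + ∑ q ∈ {.A 0, .B i, .C 0, .C 1}, Rmat M p q * y s q := by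
  rw [h.apply_fluidX hs.1, ← Finset.sum_subset (Finset.subset_univ _) fun q _ hq => by
    rw [h.y_eq_zero_of_notMem hq s hs, mul_zero]]

theorem yB_self_eq (h : IsSkorokhodSolution (Rmat M) (fluidX i C₁ C₂) y z) :
    ∀ s ∈ Icc (0 : ℝ) 1, y s (.B i) = s := by
  intro s hs
  have hz := h.apply_eq_sum_active hs (.B i)
  simp [Finset.sum_insert, encCfg, thetaVec, Rmat, h.yA0_eq s hs] at hz
  linarith [h.yB_le i s hs, h.z_nonneg hs.1 (.B i)]

theorem yC_eq (h : IsSkorokhodSolution (Rmat M) (fluidX i C₁ C₂) y z) (k : Fin 2) :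
    ∀ s ∈ Icc (0 : ℝ) 1, y s (.C k) = s * indC (encCfg i C₁ C₂ (.C k) = 0) := by
  intro s hs
  by_cases hk : encCfg i C₁ C₂ (.C k) = 0
  · have hCk : y s (.C k) = s := by
      have hle := h.yC_le k s hs
      have hnonneg := h.z_nonneg hs.1 (.C k)
      rw [h.apply_eq_sum_active hs, hk] at hnonneg
      fin_cases k <;> simp [Finset.sum_insert, thetaVec, Rmat, h.yA0_eq s hs] at hnonneg hle ⊢ <;>
        linarith
    simp [hCk, indC, hk]
  · have hk1 : 1 ≤ encCfg i C₁ C₂ (.C k) := by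
      simp only [encCfg] at hk ⊢
      split_ifs at hk ⊢ <;> exact Nat.one_le_cast.2 (Nat.pos_of_ne_zero (by exact_mod_cast hk))
    simp [h.yC_eq_zero_of_one_le hk1 s hs, indC, hk]

theorem y_eq_smul_activeRates (h : IsSkorokhodSolution (Rmat M) (fluidX i C₁ C₂) y z) :
    ∀ s ∈ Icc (0 : ℝ) 1, y s = s • activeRates i C₁ C₂ := by
  intro s hs
  funext q
  by_cases hq : q ∈ ({.A 0, .B i, .C 0, .C 1} : Finset (Idx m))
  · simp only [Finset.mem_insert, Finset.mem_singleton] at hq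
    rcases hq with rfl | rfl | rfl | rfl
    · simp [activeRates, h.yA0_eq s hs]
    · simp [activeRates, h.yB_self_eq s hs]
    · simp [activeRates, h.yC_eq 0 s hs, encCfg]
    · simp [activeRates, h.yC_eq 1 s hs, encCfg]
  · rw [h.y_eq_zero_of_notMem hq s hs]
    simp only [Finset.mem_insert, Finset.mem_singleton, not_or] at hq
    simp [activeRates, hq]

theorem z_one_eq (h : IsSkorokhodSolution (Rmat M) (fluidX i C₁ C₂) y z) :
    z 1 = encCfg i C₁ C₂ + thetaVec m + (Rmat M).mulVec (activeRates i C₁ C₂) := by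
  rw [h.apply_eq zero_le_one, h.y_eq_smul_activeRates 1 ⟨zero_le_one, le_rfl⟩, one_smul]
  funext p
  simp [fluidX]

end IsSkorokhodSolution

theorem dynamics_interval_0_general {m : ℕ} (M : CounterMachine m)
    (i0 : Fin m) (C₁0 C₂0 : ℕ) (y z : ℝ → Idx m → ℝ)
    (h : IsSkorokhodSolution (Rmat M) (fluidX i0 C₁0 C₂0) y z)
    (t : ℕ) (i : Fin m) (C₁ C₂ : ℕ)
    (hz : z (5 * (t : ℝ)) = encCfg i C₁ C₂) :
    (UnitActive (fun s => y s (.A 0)) (5 * (t : ℝ)) (5 * (t : ℝ) + 1)) ∧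
    (UnitActive (fun s => y s (.B i)) (5 * (t : ℝ)) (5 * (t : ℝ) + 1)) ∧
    (C₁ = 0 → UnitActive (fun s => y s (.C 0)) (5 * (t : ℝ)) (5 * (t : ℝ) + 1)) ∧
    (0 < C₁ → Passive (fun s => y s (.C 0)) (5 * (t : ℝ)) (5 * (t : ℝ) + 1)) ∧
    (C₂ = 0 → UnitActive (fun s => y s (.C 1)) (5 * (t : ℝ)) (5 * (t : ℝ) + 1)) ∧
    (0 < C₂ → Passive (fun s => y s (.C 1)) (5 * (t : ℝ)) (5 * (t : ℝ) + 1)) ∧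
    (∀ k : Fin 5, k ≠ 0 →
      Passive (fun s => y s (.A k)) (5 * (t : ℝ)) (5 * (t : ℝ) + 1)) ∧
    (∀ j : Fin m, j ≠ i →
      Passive (fun s => y s (.B j)) (5 * (t : ℝ)) (5 * (t : ℝ) + 1)) ∧
    (∀ k : Fin 2, Passive (fun s => y s (.D k)) (5 * (t : ℝ)) (5 * (t : ℝ) + 1)) ∧
    (∀ (i' : Fin m) (b c : Bool),
      Passive (fun s => y s (.E i' b c)) (5 * (t : ℝ)) (5 * (t : ℝ) + 1)) ∧
    (∀ (i' : Fin m) (b c : Bool),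
      Passive (fun s => y s (.F i' b c)) (5 * (t : ℝ)) (5 * (t : ℝ) + 1)) ∧
    (z (5 * (t : ℝ) + 1) (.A 0) = 0 ∧ z (5 * (t : ℝ) + 1) (.A 1) = 0 ∧
      z (5 * (t : ℝ) + 1) (.A 2) = 1 ∧ z (5 * (t : ℝ) + 1) (.A 3) = 1 ∧
      z (5 * (t : ℝ) + 1) (.A 4) = 1) ∧
    (∀ j : Fin m, z (5 * (t : ℝ) + 1) (.B j) = 0) ∧
    (z (5 * (t : ℝ) + 1) (.C 0) = (C₁ : ℝ) - 1 + indC (C₁ = 0)) ∧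
    (z (5 * (t : ℝ) + 1) (.C 1) = (C₂ : ℝ) - 1 + indC (C₂ = 0)) ∧
    (z (5 * (t : ℝ) + 1) (.D 0) = indC (C₁ = 0)) ∧
    (z (5 * (t : ℝ) + 1) (.D 1) = indC (C₂ = 0)) ∧
    (∀ (i' : Fin m) (b c : Bool),
      z (5 * (t : ℝ) + 1) (.E i' b c) = 3 + Upsilon i C₁ C₂ i' b c) ∧
    (∀ (i' : Fin m) (b c : Bool),
      z (5 * (t : ℝ) + 1) (.F i' b c) = 4 + Upsilon i C₁ C₂ i' b c) := by
  set T : ℝ := 5 * (t : ℝ)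
  have h' := h.shift_fluidX (by positivity) hz
  have hrate (q : Idx m) :
      ActiveAtRate (fun s => y s q) (activeRates i C₁ C₂ q) T (T + 1) :=
    activeAtRate_of_forall_Icc fun s hs => congrFun (h'.y_eq_smul_activeRates s hs) q
  have hz1 : z (T + 1) = encCfg i C₁ C₂ + thetaVec m + (Rmat M).mulVec (activeRates i C₁ C₂) :=
    h'.z_one_eq
  refine ⟨?_, ?_, fun hC => ?_, fun hC => ?_, fun hC => ?_, fun hC => ?_, fun k hk => ?_,
    fun j hj => ?_, fun k => ?_, fun j b c => ?_, fun j b c => ?_, ?_, fun j => ?_, ?_, ?_, ?_, ?_,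
    fun j b c => ?_, fun j b c => ?_⟩
  · simpa [UnitActive, activeRates] using hrate (.A 0)
  · simpa [UnitActive, activeRates] using hrate (.B i)
  · simpa [UnitActive, activeRates, hC, indC] using hrate (.C 0)
  · exact ActiveAtRate.passive (by simpa [activeRates, hC.ne', indC] using hrate (.C 0))
  · simpa [UnitActive, activeRates, hC, indC] using hrate (.C 1)
  · exact ActiveAtRate.passive (by simpa [activeRates, hC.ne', indC] using hrate (.C 1))
  · exact ActiveAtRate.passive (by simpa [activeRates, hk] using hrate (.A k))
  · exact ActiveAtRate.passive (by simpa [activeRates, hj] using hrate (.B j))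
  · exact ActiveAtRate.passive (by simpa [activeRates] using hrate (.D k))
  · exact ActiveAtRate.passive (by simpa [activeRates] using hrate (.E j b c))
  · exact ActiveAtRate.passive (by simpa [activeRates] using hrate (.F j b c))
  all_goals simp [hz1, Rmat_mulVec_activeRates, Rmat, AAmat, encCfg, thetaVec, indC, Upsilon,
    @eq_comm _ i]
  all_goals (try split_ifs) <;> ring

/-- Dynamics over the interval `(5t, 5t+1)`: `y_{A,1}` and
`y_{B,i}` are active at unit rate, `y_{C,k}` is active at unit rate iff
`C_k = 0`, all remaining `y`-coordinates are passive, and the state `z(5t+1)`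
is as indicated. -/
theorem dynamics_interval_0 {m : ℕ} (M : CounterMachine m)
    (i0 : Fin m) (C₁0 C₂0 : ℕ) (y z : ℝ → Idx m → ℝ)
    (h : IsSkorokhodSolution (Rmat M) (fluidX i0 C₁0 C₂0) y z)
    (t : ℕ) (i : Fin m) (C₁ C₂ : ℕ)
    (htraj : (M.step)^[t] (i0, C₁0, C₂0) = (i, C₁, C₂))
    (hz : z (5 * (t : ℝ)) = encCfg i C₁ C₂) :
    (UnitActive (fun s => y s (.A 0)) (5 * (t : ℝ)) (5 * (t : ℝ) + 1)) ∧
    (UnitActive (fun s => y s (.B i)) (5 * (t : ℝ)) (5 * (t : ℝ) + 1)) ∧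
    (C₁ = 0 → UnitActive (fun s => y s (.C 0)) (5 * (t : ℝ)) (5 * (t : ℝ) + 1)) ∧
    (0 < C₁ → Passive (fun s => y s (.C 0)) (5 * (t : ℝ)) (5 * (t : ℝ) + 1)) ∧
    (C₂ = 0 → UnitActive (fun s => y s (.C 1)) (5 * (t : ℝ)) (5 * (t : ℝ) + 1)) ∧
    (0 < C₂ → Passive (fun s => y s (.C 1)) (5 * (t : ℝ)) (5 * (t : ℝ) + 1)) ∧
    (∀ k : Fin 5, k ≠ 0 →
      Passive (fun s => y s (.A k)) (5 * (t : ℝ)) (5 * (t : ℝ) + 1)) ∧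
    (∀ j : Fin m, j ≠ i →
      Passive (fun s => y s (.B j)) (5 * (t : ℝ)) (5 * (t : ℝ) + 1)) ∧
    (∀ k : Fin 2, Passive (fun s => y s (.D k)) (5 * (t : ℝ)) (5 * (t : ℝ) + 1)) ∧
    (∀ (i' : Fin m) (b c : Bool),
      Passive (fun s => y s (.E i' b c)) (5 * (t : ℝ)) (5 * (t : ℝ) + 1)) ∧
    (∀ (i' : Fin m) (b c : Bool),
      Passive (fun s => y s (.F i' b c)) (5 * (t : ℝ)) (5 * (t : ℝ) + 1)) ∧
    (z (5 * (t : ℝ) + 1) (.A 0) = 0 ∧ z (5 * (t : ℝ) + 1) (.A 1) = 0 ∧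
      z (5 * (t : ℝ) + 1) (.A 2) = 1 ∧ z (5 * (t : ℝ) + 1) (.A 3) = 1 ∧
      z (5 * (t : ℝ) + 1) (.A 4) = 1) ∧
    (∀ j : Fin m, z (5 * (t : ℝ) + 1) (.B j) = 0) ∧
    (z (5 * (t : ℝ) + 1) (.C 0) = (C₁ : ℝ) - 1 + indC (C₁ = 0)) ∧
    (z (5 * (t : ℝ) + 1) (.C 1) = (C₂ : ℝ) - 1 + indC (C₂ = 0)) ∧
    (z (5 * (t : ℝ) + 1) (.D 0) = indC (C₁ = 0)) ∧
    (z (5 * (t : ℝ) + 1) (.D 1) = indC (C₂ = 0)) ∧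
    (∀ (i' : Fin m) (b c : Bool),
      z (5 * (t : ℝ) + 1) (.E i' b c) = 3 + Upsilon i C₁ C₂ i' b c) ∧
    (∀ (i' : Fin m) (b c : Bool),
      z (5 * (t : ℝ) + 1) (.F i' b c) = 4 + Upsilon i C₁ C₂ i' b c) :=
  dynamics_interval_0_general M i0 C₁0 C₂0 y z h t i C₁ C₂ hz
end

section
/- Let Γ be a consistent counter machine with m states, let (y,z) be a Skorokhod solution of the associated problem with z(0) = z^{i⁰,C⁰₁,C⁰₂}, let t ∈ ℕ, and suppose z(5t) = z^{i,C₁,C₂} where (i,C₁,C₂) is the configuration of the trajectory at time t. Let (i′,Δ₁,Δ₂) = Γ(i, 1{C₁>0}, 1{C₂>0}), b* = min(C₁,1), c* = min(C₂,1), and Υ(i″,b,c) = −b−c+(2b−1)·1{C₁=0}+(2c−1)·1{C₂=0}−1{i″=i}. Then on the interval (5t+3, 5t+4): y_{A,4} is active at unit rate; each coordinate y_{F,(i″,b,c)} is passive on (5t+3, 5t+3+q) and active at rate 4 on (5t+3+q, 5t+4), where q = (3 + Υ(i″,b,c) + 1{(i″,b,c)=(i,b*,c*)})/4; all remaining y-coordinates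 are passive. Moreover z(5t+4) is given by: z_A(5t+4) = (1,1,1,0,0); z_{B,i′}(5t+4) = 0 and z_{B,j}(5t+4) = 1 for j ≠ i′; z_{C,k}(5t+4) = C_k + Δ_k for k = 1,2; z_D(5t+4) = (0,0); z_E(5t+4) ≡ 3; z_F(5t+4) ≡ 0. -/
open scoped BigOperators

/-!
During the period `[5t, 5t + 5]` the A-coordinates act as a clock: the block `AA` is circulant,
so on the `k`-th unit interval exactly `y_{A,k}` pushes, at unit rate, and every other
A-coordinate idles. Knowing `z` at the start of an interval, each remaining coordinate `j` has a
free path `z_j - y_j` that is either nonnegative (then `y_j` is passive) or of the form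
`w - c (s - a)` (then `y_j` grows like `(c (s - a) - w)⁺`, by the one-dimensional reflection
principle). Going through the rows of `R` in a suitable order this determines `y` on
`[5t, 5t + 4]` and the values of `z` at `5t + 1, …, 5t + 4`; in the last interval `z_F` starts at
`3 + Υ + 1{(i″,b,c) = (i,b*,c*)} ∈ [1, 3]` and is driven down at rate `4`, which produces the
delay `q`. Consistency of `Γ` is what keeps the new counter values nonnegative.
-/

open Set Matrix

theorem ContinuousOn.exists_last_nonpos {g : ℝ → ℝ} {a b : ℝ} (hab : a ≤ b)
    (hg : ContinuousOn g (Icc a b)) (ha : g a ≤ 0) (hb : 0 < g b) :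
    ∃ c ∈ Ico a b, g c ≤ 0 ∧ ∀ s ∈ Ioo c b, 0 < g s := by
  set S := Icc a b ∩ g ⁻¹' Iic 0
  have hS : IsCompact S := isCompact_Icc.of_isClosed_subset
    (hg.preimage_isClosed_of_isClosed isClosed_Icc isClosed_Iic) inter_subset_left
  obtain ⟨⟨hca, hcb⟩, hgc⟩ : sSup S ∈ S := hS.sSup_mem ⟨a, left_mem_Icc.2 hab, ha⟩
  refine ⟨sSup S, ⟨hca, hcb.lt_of_ne ?_⟩, hgc, fun s hs => ?_⟩
  · rintro hcb
    rw [hcb] at hgc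
    exact (hgc.trans_lt hb).false
  · by_contra! hgs
    have : s ≤ sSup S := le_csSup hS.bddAbove ⟨⟨hca.trans hs.1.le, hs.2.le⟩, hgs⟩
    exact this.not_gt hs.1

namespace IsSkorokhodSolution

variable {n : Type*} [Fintype n] {R : Matrix n n ℝ} {x y z : ℝ → n → ℝ}
  (h : IsSkorokhodSolution R x y z) {a b : ℝ}
include h

theorem sub_eq {s : ℝ} (ha : 0 ≤ a) (hs : 0 ≤ s) :
    z s = z a + (x s - x a) + R *ᵥ (y s - y a) := by
  rw [h.2.2.1 s hs, h.2.2.1 a ha, Matrix.mulVec_sub]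
  abel

theorem incr_nonneg (j : n) {s : ℝ} (ha : 0 ≤ a) (has : a ≤ s) : 0 ≤ y s j - y a j :=
  sub_nonneg.2 (h.2.2.2.2.2.1 j ha (mem_Ici.2 (ha.trans has)) has)

/-- While `y j` exceeds the nondecreasing `f`, `z j` is positive, so `y j` cannot increase. -/
theorem incr_le_of_sub_le (j : n) {f : ℝ → ℝ} (ha : 0 ≤ a)
    (hf : ContinuousOn f (Icc a b)) (hfm : MonotoneOn f (Icc a b)) (hfa : 0 ≤ f a)
    (hz : ∀ s ∈ Icc a b, y s j - y a j - f s ≤ z s j) :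
    ∀ s ∈ Icc a b, y s j - y a j ≤ f s := by
  intro s hs
  by_contra! hlt
  have hy : ContinuousOn (fun r => y r j) (Icc a s) :=
    ((continuous_apply j).comp_continuousOn h.1).mono fun r hr => ha.trans hr.1
  obtain ⟨c, hc, hgc, hpos⟩ := ContinuousOn.exists_last_nonpos (g := fun r => y r j - y a j - f r)
    hs.1 ((hy.sub continuousOn_const).sub (hf.mono (Icc_subset_Icc_right hs.2)))
    (by simpa using hfa) (by simpa using hlt)
  have hcs : y s j = y c j := h.2.2.2.2.2.2 j c s (ha.trans hc.1) hc.2.le fun r hr =>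
    (hpos r hr).trans_le (hz r ⟨hc.1.trans hr.1.le, hr.2.le.trans hs.2⟩)
  have hfcs : f c ≤ f s := hfm ⟨hc.1, hc.2.le.trans hs.2⟩ hs hc.2.le
  linarith

theorem incr_eq_zero_of_le (j : n) (ha : 0 ≤ a)
    (hz : ∀ s ∈ Icc a b, y s j - y a j ≤ z s j) :
    ∀ s ∈ Icc a b, y s j - y a j = 0 := fun s hs =>
  le_antisymm
    (h.incr_le_of_sub_le j ha continuousOn_const monotoneOn_const le_rfl
      (fun s hs => by simpa using hz s hs) s hs)
    (h.incr_nonneg j ha hs.1)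

theorem incr_eq_max_of_eq (j : n) {w c : ℝ} (ha : 0 ≤ a) (hc : 0 ≤ c)
    (hz : ∀ s ∈ Icc a b, z s j = y s j - y a j + w - c * (s - a)) :
    ∀ s ∈ Icc a b, y s j - y a j = max 0 (c * (s - a) - w) := by
  refine fun s hs => le_antisymm (h.incr_le_of_sub_le j ha
    (f := fun r => max 0 (c * (r - a) - w)) (by fun_prop) ?_ (le_max_left _ _) (fun r hr => ?_)
    s hs)
    (max_le (h.incr_nonneg j ha hs.1) ?_)
  · exact fun r _ r' _ hrr' => max_le_max le_rfl (by nlinarith)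
  · rw [hz r hr]
    linarith [le_max_right 0 (c * (r - a) - w)]
  · linarith [hz s hs, h.2.2.2.1 s (ha.trans hs.1) j]

theorem incr_eq_mul_of_eq (j : n) {c : ℝ} (ha : 0 ≤ a) (hc : 0 ≤ c)
    (hz : ∀ s ∈ Icc a b, z s j = y s j - y a j - c * (s - a)) :
    ∀ s ∈ Icc a b, y s j - y a j = c * (s - a) := fun s hs => by
  rw [h.incr_eq_max_of_eq j (w := 0) ha hc (fun r hr => by rw [hz r hr]; ring) s hs, sub_zero,
    max_eq_right (mul_nonneg hc (sub_nonneg.2 hs.1))]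

end IsSkorokhodSolution

theorem passive_and_activeAtRate_of_eq_max {f : ℝ → ℝ} {a b r w : ℝ} (hr : 0 < r)
    (hw : 0 ≤ w) (hwb : a + w / r ≤ b)
    (hf : ∀ s ∈ Icc a b, f s - f a = max 0 (r * (s - a) - w)) :
    Passive f a (a + w / r) ∧ ActiveAtRate f r (a + w / r) b := by
  have hq : r * (w / r) = w := mul_div_cancel₀ w hr.ne'
  have hfq : f (a + w / r) = f a := by
    have := hf _ ⟨by linarith [div_nonneg hw hr.le], hwb⟩
    rw [add_sub_cancel_left, hq, sub_self, max_self] at this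
    linarith
  constructor
  · intro s hs
    have := hf s ⟨hs.1.le, hs.2.le.trans hwb⟩
    rw [max_eq_left (by nlinarith [hs.2])] at this
    linarith
  · intro s hs
    have := hf s ⟨by linarith [hs.1, div_nonneg hw hr.le], hs.2.le⟩
    rw [max_eq_right (by nlinarith [hs.1])] at this
    rw [hfq]
    nlinarith

@[simp] theorem bnum_true : bnum true = 1 := rfl

@[simp] theorem bnum_false : bnum false = 0 := rfl

@[simp] theorem indC_true [Decidable True] : indC True = 1 := if_pos trivial

@[simp] theorem indC_false [Decidable False] : indC False = 0 := if_neg not_false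

theorem indC_nonneg (P : Prop) [Decidable P] : 0 ≤ indC P := by
  unfold indC; split_ifs <;> norm_num

theorem indC_le_one (P : Prop) [Decidable P] : indC P ≤ 1 := by
  unfold indC; split_ifs <;> norm_num

def CounterMachine.delta {m : ℕ} (M : CounterMachine m) (i : Fin m) (b c : Bool) (k : Fin 2) :
    ℤ :=
  if k = 0 then (M.Γ i b c).2.1 else (M.Γ i b c).2.2

theorem CounterMachine.neg_one_le_delta {m : ℕ} (M : CounterMachine m) (i : Fin m) (b c : Bool)
    (k : Fin 2) : -1 ≤ M.delta i b c k := by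
  have hmv := M.moves i b c
  simp only [Set.mem_insert_iff, Set.mem_singleton_iff, Prod.mk.injEq] at hmv
  unfold CounterMachine.delta
  split_ifs <;> omega

theorem CounterMachine.counter_add_delta_nonneg {m : ℕ} (M : CounterMachine m) (i : Fin m)
    (C₁ C₂ : ℕ) (k : Fin 2) :
    0 ≤ (if k = 0 then (C₁ : ℝ) else C₂) + M.delta i (decide (0 < C₁)) (decide (0 < C₂)) k := by
  have key (n : ℕ) (d : ℤ) (hd : -1 ≤ d) (hn : decide (0 < n) = false → 0 ≤ d) :
      (0 : ℝ) ≤ n + d := by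
    have : (0 : ℤ) ≤ n + d := by
      rcases Nat.eq_zero_or_pos n with h0 | h0
      · simpa [h0] using hn (by simp [h0])
      · omega
    exact_mod_cast this
  have hcons := M.consistent i (decide (0 < C₁)) (decide (0 < C₂))
  fin_cases k
  · simpa [CounterMachine.delta] using key C₁ _ (M.neg_one_le_delta _ _ _ 0) hcons.1
  · simpa [CounterMachine.delta] using key C₂ _ (M.neg_one_le_delta _ _ _ 1) hcons.2

theorem natCast_sub_one_add_indC_nonneg (n : ℕ) : 0 ≤ (n : ℝ) - 1 + indC (n = 0) := by
  rcases Nat.eq_zero_or_pos n with hn | hn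
  · simp [hn]
  · have : (1 : ℝ) ≤ n := by exact_mod_cast hn
    linarith [indC_nonneg (n = 0)]

section Upsilon

variable {m : ℕ} {i : Fin m} {C₁ C₂ : ℕ}

theorem upsilon_eq (i' : Fin m) (b c : Bool) :
    Upsilon i C₁ C₂ i' b c
      = -indC (b = decide (0 < C₁)) - indC (c = decide (0 < C₂)) - indC (i' = i) := by
  by_cases h₁ : C₁ = 0 <;> by_cases h₂ : C₂ = 0 <;> cases b <;> cases c <;>
    simp [Upsilon, indC, h₁, h₂, Nat.pos_of_ne_zero] <;> norm_num

variable (i C₁ C₂) in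
theorem neg_three_le_upsilon (i' : Fin m) (b c : Bool) : -3 ≤ Upsilon i C₁ C₂ i' b c := by
  rw [upsilon_eq]
  linarith [indC_le_one (b = decide (0 < C₁)), indC_le_one (c = decide (0 < C₂)),
    indC_le_one (i' = i)]

theorem upsilon_self : Upsilon i C₁ C₂ i (decide (0 < C₁)) (decide (0 < C₂)) = -3 := by
  rw [upsilon_eq]
  simp only [indC_true]
  norm_num

theorem neg_two_le_upsilon_of_ne {i' : Fin m} {b c : Bool}
    (hne : (i', b, c) ≠ (i, decide (0 < C₁), decide (0 < C₂))) :
    -2 ≤ Upsilon i C₁ C₂ i' b c := by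
  rw [upsilon_eq]
  simp only [ne_eq, Prod.mk.injEq, not_and] at hne
  by_cases hi : i' = i <;> by_cases hb : b = decide (0 < C₁) <;>
    by_cases hc : c = decide (0 < C₂) <;> simp_all [indC] <;> norm_num

variable (i C₁ C₂) in
/-- The value of `z_F` at time `5t + 3`. -/
def slackF (i' : Fin m) (b c : Bool) : ℝ :=
  3 + Upsilon i C₁ C₂ i' b c + indC ((i', b, c) = (i, decide (0 < C₁), decide (0 < C₂)))

variable (i C₁ C₂) in
theorem one_le_slackF (i' : Fin m) (b c : Bool) : 1 ≤ slackF i C₁ C₂ i' b c := by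
  by_cases hx : (i', b, c) = (i, decide (0 < C₁), decide (0 < C₂))
  · simp only [slackF, hx, indC_true]
    simp only [Prod.mk.injEq] at hx
    rw [hx.1, hx.2.1, hx.2.2, upsilon_self]
    norm_num
  · rw [slackF, indC, if_neg hx]
    linarith [neg_two_le_upsilon_of_ne hx]

variable (i C₁ C₂) in
theorem slackF_le_three (i' : Fin m) (b c : Bool) : slackF i C₁ C₂ i' b c ≤ 3 := by
  rw [slackF, upsilon_eq]
  by_cases hx : (i', b, c) = (i, decide (0 < C₁), decide (0 < C₂))
  · simp only [Prod.mk.injEq] at hx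
    simp [hx.1, hx.2.1, hx.2.2]
    norm_num
  · rw [show indC ((i', b, c) = (i, decide (0 < C₁), decide (0 < C₂))) = 0 from if_neg hx]
    linarith [indC_nonneg (b = decide (0 < C₁)), indC_nonneg (c = decide (0 < C₂)),
      indC_nonneg (i' = i)]

end Upsilon

/-- The A-part of `z` at time `5t + k`. -/
def clockState (k l : Fin 5) : ℝ := if l = k ∨ l = k - 1 then 0 else 1

theorem clockState_step (k l : Fin 5) :
    clockState k l - 1 + indC (l = k) + 2 * indC (l + 1 = k) + indC (l + 2 = k)
      + indC (l + 3 = k) = clockState (k + 1) l := by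
  fin_cases k <;> fin_cases l <;> simp +decide [clockState, indC] <;> norm_num

namespace Idx

variable {m : ℕ}

def equivSum (m : ℕ) :
    Fin 5 ⊕ Fin m ⊕ Fin 2 ⊕ Fin 2 ⊕ (Fin m × Bool × Bool) ⊕ (Fin m × Bool × Bool) ≃ Idx m where
  toFun
    | .inl k => .A k
    | .inr (.inl j) => .B j
    | .inr (.inr (.inl k)) => .C k
    | .inr (.inr (.inr (.inl k))) => .D k
    | .inr (.inr (.inr (.inr (.inl x)))) => .E x.1 x.2.1 x.2.2
    | .inr (.inr (.inr (.inr (.inr x)))) => .F x.1 x.2.1 x.2.2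
  invFun
    | .A k => .inl k
    | .B j => .inr (.inl j)
    | .C k => .inr (.inr (.inl k))
    | .D k => .inr (.inr (.inr (.inl k)))
    | .E i b c => .inr (.inr (.inr (.inr (.inl (i, b, c)))))
    | .F i b c => .inr (.inr (.inr (.inr (.inr (i, b, c)))))
  left_inv := by rintro (k | j | k | k | ⟨i, b, c⟩ | ⟨i, b, c⟩) <;> rfl
  right_inv := by rintro (k | j | k | k | ⟨i, b, c⟩ | ⟨i, b, c⟩) <;> rfl

theorem sum_eq (f : Idx m → ℝ) :
    ∑ p, f p = ∑ k, f (.A k) + ∑ j, f (.B j) + ∑ k, f (.C k) + ∑ k, f (.D k)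
      + ∑ x : Fin m × Bool × Bool, f (.E x.1 x.2.1 x.2.2)
      + ∑ x : Fin m × Bool × Bool, f (.F x.1 x.2.1 x.2.2) := by
  rw [← (equivSum m).sum_comp f]
  simp [equivSum, Fintype.sum_sum_type, add_assoc]

end Idx

theorem sum_ite_and_eq_triple {α β γ : Type*} [Fintype α] [Fintype β] [Fintype γ]
    [DecidableEq α] [DecidableEq β] [DecidableEq γ] (f : α × β × γ → ℝ) (i : α) (b : β) (c : γ) :
    ∑ x : α × β × γ, (if x.1 = i ∧ x.2.1 = b ∧ x.2.2 = c then f x else 0) = f (i, b, c) := by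
  have hx (x : α × β × γ) : (x.1 = i ∧ x.2.1 = b ∧ x.2.2 = c) ↔ x = (i, b, c) := by
    simp [Prod.ext_iff]
  simp only [hx, Finset.sum_ite_eq', Finset.mem_univ, if_true]

namespace Rmat

variable {m : ℕ} (M : CounterMachine m) (w : Idx m → ℝ)

theorem mulVec_apply (p : Idx m) : (Rmat M *ᵥ w) p = ∑ q, Rmat M p q * w q := rfl

theorem mulVec_A (l : Fin 5) :
    (Rmat M *ᵥ w) (.A l) = w (.A l) + 2 * w (.A (l + 1)) + w (.A (l + 2)) + w (.A (l + 3)) := by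
  rw [mulVec_apply, Idx.sum_eq]
  fin_cases l <;> simp [Rmat, AAmat, Fin.sum_univ_five] <;> ring

theorem mulVec_B (j : Fin m) :
    (Rmat M *ᵥ w) (.B j) = -w (.A 0) + w (.B j) + ∑ x : Fin m × Bool × Bool,
      (if (M.Γ x.1 x.2.1 x.2.2).1 = j then 0 else 1) * w (.E x.1 x.2.1 x.2.2) := by
  rw [mulVec_apply, Idx.sum_eq]
  simp [Rmat]

theorem mulVec_C (k : Fin 2) :
    (Rmat M *ᵥ w) (.C k) = -w (.A 0) - w (.A 3) + w (.C k) + w (.D k) +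
      ∑ x : Fin m × Bool × Bool,
        ((M.delta x.1 x.2.1 x.2.2 k : ℝ) + 1) * w (.E x.1 x.2.1 x.2.2) := by
  rw [mulVec_apply, Idx.sum_eq]
  simp [Rmat, Fin.sum_univ_five, CounterMachine.delta, apply_ite (Int.cast : ℤ → ℝ)]
  ring

theorem mulVec_D (k : Fin 2) :
    (Rmat M *ᵥ w) (.D k) = -w (.A 1) + w (.C k) + w (.D k) := by
  rw [mulVec_apply, Idx.sum_eq]
  simp [Rmat]

theorem mulVec_E (i : Fin m) (b c : Bool) :
    (Rmat M *ᵥ w) (.E i b c) = -(bnum b + bnum c) * w (.A 0) - w (.A 2) - w (.B i)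
      + (2 * bnum b - 1) * w (.C 0) + (2 * bnum c - 1) * w (.C 1)
      + w (.E i b c) + w (.F i b c) := by
  rw [mulVec_apply, Idx.sum_eq]
  simp [Rmat, Fin.sum_univ_five, Fin.sum_univ_two,
    sum_ite_and_eq_triple fun x => w (.E x.1 x.2.1 x.2.2),
    sum_ite_and_eq_triple fun x => w (.F x.1 x.2.1 x.2.2)]
  ring

theorem mulVec_F (i : Fin m) (b c : Bool) :
    (Rmat M *ᵥ w) (.F i b c) = -(bnum b + bnum c) * w (.A 0) - w (.A 2)
      - 4 * w (.A 3) + 4 * w (.A 4) - w (.B i)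
      + (2 * bnum b - 1) * w (.C 0) + (2 * bnum c - 1) * w (.C 1)
      + w (.E i b c) + w (.F i b c) := by
  rw [mulVec_apply, Idx.sum_eq]
  simp [Rmat, Fin.sum_univ_five, Fin.sum_univ_two,
    sum_ite_and_eq_triple fun x => w (.E x.1 x.2.1 x.2.2),
    sum_ite_and_eq_triple fun x => w (.F x.1 x.2.1 x.2.2)]
  ring

end Rmat

section Profiles

/-! `profileK` is `z (5t + K)`; during `[5t + K, 5t + K + 1]` the increment `y s - y (5t + K)` is
`(s - 5t - K) • rateK` for `K ≤ 2`, and `incr3 (s - 5t - 3)` for `K = 3`. -/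

variable {m : ℕ} (M : CounterMachine m) (i : Fin m) (C₁ C₂ : ℕ)

theorem encCfg_A (l : Fin 5) : encCfg i C₁ C₂ (.A l) = clockState 0 l := by
  fin_cases l <;> simp +decide [encCfg, clockState]

def rate0 : Idx m → ℝ
  | .A l => indC (l = 0)
  | .B j => indC (j = i)
  | .C k => if k = 0 then indC (C₁ = 0) else indC (C₂ = 0)
  | _ => 0

def profile1 : Idx m → ℝ
  | .A l => clockState 1 l
  | .B _ => 0
  | .C k => if k = 0 then (C₁ : ℝ) - 1 + indC (C₁ = 0) else (C₂ : ℝ) - 1 + indC (C₂ = 0)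
  | .D k => if k = 0 then indC (C₁ = 0) else indC (C₂ = 0)
  | .E i' b c => 3 + Upsilon i C₁ C₂ i' b c
  | .F i' b c => 4 + Upsilon i C₁ C₂ i' b c

theorem encCfg_add_rate0 :
    encCfg i C₁ C₂ + thetaVec m + Rmat M *ᵥ rate0 i C₁ C₂ = profile1 i C₁ C₂ := by
  funext p
  cases p with
  | A l =>
    rw [Pi.add_apply, Pi.add_apply, Rmat.mulVec_A, encCfg_A,
      show profile1 i C₁ C₂ (.A l) = clockState (0 + 1) l from rfl, ← clockState_step]
    simp only [rate0, thetaVec]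
    ring
  | B j =>
    by_cases hj : j = i <;> simp [Rmat.mulVec_B, rate0, profile1, encCfg, thetaVec, indC, hj]
  | C k => fin_cases k <;> simp [Rmat.mulVec_C, rate0, profile1, encCfg, thetaVec] <;> ring
  | D k => fin_cases k <;> simp [Rmat.mulVec_D, rate0, profile1, encCfg, thetaVec]
  | E i' b c =>
    simp [Rmat.mulVec_E, rate0, profile1, encCfg, thetaVec, Upsilon]
    ring
  | F i' b c =>
    simp [Rmat.mulVec_F, rate0, profile1, encCfg, thetaVec, Upsilon]
    ring

def rate1 : Idx m → ℝ
  | .A l => indC (l = 1)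
  | .D k => if k = 0 then 1 - indC (C₁ = 0) else 1 - indC (C₂ = 0)
  | _ => 0

def profile2 : Idx m → ℝ
  | .A l => clockState 2 l
  | .C k => if k = 0 then (C₁ : ℝ) else C₂
  | .E i' b c => 3 + Upsilon i C₁ C₂ i' b c
  | .F i' b c => 4 + Upsilon i C₁ C₂ i' b c
  | _ => 0

def rate2 : Idx m → ℝ
  | .A l => indC (l = 2)
  | .E i' b c => indC ((i', b, c) = (i, decide (0 < C₁), decide (0 < C₂)))
  | _ => 0

def profile3 : Idx m → ℝ
  | .A l => clockState 3 l
  | .B j => if (M.Γ i (decide (0 < C₁)) (decide (0 < C₂))).1 = j then 0 else 1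
  | .C k =>
    (if k = 0 then (C₁ : ℝ) else C₂) + M.delta i (decide (0 < C₁)) (decide (0 < C₂)) k + 1
  | .D _ => 0
  | .E i' b c => slackF i C₁ C₂ i' b c - 1
  | .F i' b c => slackF i C₁ C₂ i' b c

def incr3 (τ : ℝ) : Idx m → ℝ
  | .A l => τ * indC (l = 3)
  | .F i' b c => max 0 (4 * τ - slackF i C₁ C₂ i' b c)
  | _ => 0

def profile4 : Idx m → ℝ
  | .A l => clockState 4 l
  | .B j => if (M.Γ i (decide (0 < C₁)) (decide (0 < C₂))).1 = j then 0 else 1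
  | .C k => (if k = 0 then (C₁ : ℝ) else C₂) + M.delta i (decide (0 < C₁)) (decide (0 < C₂)) k
  | .D _ => 0
  | .E _ _ _ => 3
  | .F _ _ _ => 0

theorem profile1_add_rate1 :
    profile1 i C₁ C₂ + thetaVec m + Rmat M *ᵥ rate1 C₁ C₂ = profile2 i C₁ C₂ := by
  funext p
  cases p with
  | A l =>
    rw [Pi.add_apply, Pi.add_apply, Rmat.mulVec_A,
      show profile2 i C₁ C₂ (.A l) = clockState (1 + 1) l from rfl, ← clockState_step]
    simp only [rate1, profile1, thetaVec]
    ring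
  | B j => simp [Rmat.mulVec_B, rate1, profile1, profile2, thetaVec]
  | C k => fin_cases k <;> simp [Rmat.mulVec_C, rate1, profile1, profile2, thetaVec]
  | D k => fin_cases k <;> simp [Rmat.mulVec_D, rate1, profile1, profile2, thetaVec] <;> ring
  | E i' b c => simp [Rmat.mulVec_E, rate1, profile1, profile2, thetaVec]
  | F i' b c => simp [Rmat.mulVec_F, rate1, profile1, profile2, thetaVec]

theorem profile2_add_rate2 :
    profile2 i C₁ C₂ + thetaVec m + Rmat M *ᵥ rate2 i C₁ C₂ = profile3 M i C₁ C₂ := by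
  funext p
  cases p with
  | A l =>
    rw [Pi.add_apply, Pi.add_apply, Rmat.mulVec_A,
      show profile3 M i C₁ C₂ (.A l) = clockState (2 + 1) l from rfl, ← clockState_step]
    simp only [rate2, profile2, thetaVec]
    ring
  | B j => simp [Rmat.mulVec_B, rate2, profile2, profile3, thetaVec, indC]
  | C k => fin_cases k <;> simp [Rmat.mulVec_C, rate2, profile2, profile3, thetaVec, indC,
      CounterMachine.delta] <;> ring
  | D k => simp [Rmat.mulVec_D, rate2, profile2, profile3, thetaVec]
  | E i' b c =>
    simp [Rmat.mulVec_E, rate2, profile2, profile3, thetaVec, slackF]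
    ring
  | F i' b c =>
    simp [Rmat.mulVec_F, rate2, profile2, profile3, thetaVec, slackF]
    ring

theorem profile3_add_incr3 :
    profile3 M i C₁ C₂ + thetaVec m + Rmat M *ᵥ incr3 i C₁ C₂ 1 = profile4 M i C₁ C₂ := by
  have hF i' b c : max 0 (4 * 1 - slackF i C₁ C₂ i' b c) = 4 - slackF i C₁ C₂ i' b c := by
    rw [max_eq_right] <;> linarith [slackF_le_three i C₁ C₂ i' b c]
  funext p
  cases p with
  | A l =>
    rw [Pi.add_apply, Pi.add_apply, Rmat.mulVec_A,
      show profile4 M i C₁ C₂ (.A l) = clockState (3 + 1) l from rfl, ← clockState_step]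
    simp only [incr3, profile3, thetaVec]
    ring
  | B j => simp [Rmat.mulVec_B, incr3, profile3, profile4, thetaVec]
  | C k => fin_cases k <;> simp [Rmat.mulVec_C, incr3, profile3, profile4, thetaVec]
  | D k => simp [Rmat.mulVec_D, incr3, profile3, profile4, thetaVec]
  | E i' b c =>
    simp only [Pi.add_apply, Rmat.mulVec_E, incr3, profile3, profile4, thetaVec, hF]
    simp
    norm_num
  | F i' b c =>
    simp only [Pi.add_apply, Rmat.mulVec_F, incr3, profile3, profile4, thetaVec, hF]
    simp
    ring

end Profiles

namespace IsSkorokhodSolution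

variable {m : ℕ} {M : CounterMachine m} {i0 : Fin m} {C₁0 C₂0 : ℕ} {y z : ℝ → Idx m → ℝ}
  (h : IsSkorokhodSolution (Rmat M) (fluidX i0 C₁0 C₂0) y z) {a : ℝ} {i : Fin m} {C₁ C₂ : ℕ}
include h

theorem apply_eq_add_incr (ha : 0 ≤ a) {s : ℝ} (has : a ≤ s) (p : Idx m) :
    z s p = z a p + thetaVec m p * (s - a) + (Rmat M *ᵥ (y s - y a)) p := by
  rw [h.sub_eq ha (ha.trans has)]
  simp only [Pi.add_apply, Pi.sub_apply, fluidX]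
  ring

theorem incr_A (ha : 0 ≤ a) (k : Fin 5) (hz : ∀ l, z a (.A l) = clockState k l) :
    ∀ s ∈ Icc a (a + 1), ∀ l, y s (.A l) - y a (.A l) = (s - a) * indC (l = k) := by
  have row : ∀ s ∈ Icc a (a + 1), ∀ l, z s (.A l) = clockState k l - (s - a)
      + (y s (.A l) - y a (.A l)) + 2 * (y s (.A (l + 1)) - y a (.A (l + 1)))
      + (y s (.A (l + 2)) - y a (.A (l + 2))) + (y s (.A (l + 3)) - y a (.A (l + 3))) :=
    fun s hs l => by
      rw [h.apply_eq_add_incr ha hs.1, Rmat.mulVec_A, hz]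
      simp only [thetaVec, Pi.sub_apply]
      ring
  have hY := fun s (hs : s ∈ Icc a (a + 1)) (l : Fin 5) => h.incr_nonneg (.A l) ha hs.1
  have hidle : ∀ l, l ≠ k → l ≠ k - 1 → ∀ s ∈ Icc a (a + 1), y s (.A l) - y a (.A l) = 0 :=
    fun l hlk hlk' => h.incr_eq_zero_of_le _ ha fun s hs => by
      rw [row s hs, clockState, if_neg (not_or.2 ⟨hlk, hlk'⟩)]
      linarith [hs.2, hY s hs (l + 1), hY s hs (l + 2), hY s hs (l + 3)]
  have hne : k + 1 ≠ k ∧ k + 1 ≠ k - 1 ∧ k + 2 ≠ k ∧ k + 2 ≠ k - 1 ∧ k + 3 ≠ k ∧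
      k + 3 ≠ k - 1 ∧ k - 1 ≠ k := by
    fin_cases k <;> decide
  have hact : ∀ s ∈ Icc a (a + 1), y s (.A k) - y a (.A k) = 1 * (s - a) :=
    h.incr_eq_mul_of_eq _ ha zero_le_one fun s hs => by
      rw [row s hs, hidle _ hne.1 hne.2.1 s hs, hidle _ hne.2.2.1 hne.2.2.2.1 s hs,
        hidle _ hne.2.2.2.2.1 hne.2.2.2.2.2.1 s hs]
      simp only [clockState, true_or, if_true]
      ring
  have hprev : ∀ s ∈ Icc a (a + 1), y s (.A (k - 1)) - y a (.A (k - 1)) = 0 :=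
    h.incr_eq_zero_of_le _ ha fun s hs => by
      rw [row s hs, sub_add_cancel k 1, hact s hs]
      simp only [clockState, or_true, if_true]
      linarith [hs.1, hY s hs (k - 1 + 2), hY s hs (k - 1 + 3)]
  intro s hs l
  by_cases hlk : l = k
  · rw [hlk, hact s hs, indC, if_pos rfl, one_mul, mul_one]
  by_cases hlk' : l = k - 1
  · rw [hlk', hprev s hs, indC, if_neg hne.2.2.2.2.2.2, mul_zero]
  rw [hidle l hlk hlk' s hs, indC, if_neg hlk, mul_zero]

theorem apply_add_one (ha : 0 ≤ a) :
    z (a + 1) = z a + thetaVec m + Rmat M *ᵥ (y (a + 1) - y a) := by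
  funext p
  rw [h.apply_eq_add_incr ha (by linarith) p]
  simp

theorem incr_B_sub_le (ha : 0 ≤ a) {s : ℝ} (has : a ≤ s) (j : Fin m) :
    y s (.B j) - y a (.B j) - (y s (.A 0) - y a (.A 0)) + z a (.B j) ≤ z s (.B j) := by
  have hE : 0 ≤ ∑ x : Fin m × Bool × Bool, (if (M.Γ x.1 x.2.1 x.2.2).1 = j then 0 else 1) *
      (y s (.E x.1 x.2.1 x.2.2) - y a (.E x.1 x.2.1 x.2.2)) :=
    Finset.sum_nonneg fun x _ => mul_nonneg (by split_ifs <;> norm_num) (h.incr_nonneg _ ha has)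
  rw [h.apply_eq_add_incr ha has, Rmat.mulVec_B]
  simp only [thetaVec, Pi.sub_apply]
  linarith

theorem incr_C_sub_le (ha : 0 ≤ a) {s : ℝ} (has : a ≤ s) (k : Fin 2) :
    y s (.C k) - y a (.C k) - (y s (.A 0) - y a (.A 0)) - (y s (.A 3) - y a (.A 3))
      + z a (.C k) ≤ z s (.C k) := by
  have hE : 0 ≤ ∑ x : Fin m × Bool × Bool, ((M.delta x.1 x.2.1 x.2.2 k : ℝ) + 1) *
      (y s (.E x.1 x.2.1 x.2.2) - y a (.E x.1 x.2.1 x.2.2)) :=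
    Finset.sum_nonneg fun x _ => mul_nonneg
      (by have := M.neg_one_le_delta x.1 x.2.1 x.2.2 k; rify at this; linarith)
      (h.incr_nonneg _ ha has)
  rw [h.apply_eq_add_incr ha has, Rmat.mulVec_C]
  simp only [thetaVec, Pi.sub_apply]
  linarith [h.incr_nonneg (.D k) ha has]

theorem incr_B_eq_zero (ha : 0 ≤ a) (j : Fin m)
    (hB : ∀ s ∈ Icc a (a + 1), y s (.A 0) - y a (.A 0) ≤ z a (.B j)) :
    ∀ s ∈ Icc a (a + 1), y s (.B j) - y a (.B j) = 0 :=
  h.incr_eq_zero_of_le _ ha fun s hs => by linarith [hB s hs, h.incr_B_sub_le ha hs.1 j]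

theorem incr_C_eq_zero (ha : 0 ≤ a) (k : Fin 2)
    (hC : ∀ s ∈ Icc a (a + 1),
      y s (.A 0) - y a (.A 0) + (y s (.A 3) - y a (.A 3)) ≤ z a (.C k)) :
    ∀ s ∈ Icc a (a + 1), y s (.C k) - y a (.C k) = 0 :=
  h.incr_eq_zero_of_le _ ha fun s hs => by linarith [hC s hs, h.incr_C_sub_le ha hs.1 k]

theorem incr_D_eq_zero (ha : 0 ≤ a) (k : Fin 2)
    (hD : ∀ s ∈ Icc a (a + 1), y s (.A 1) - y a (.A 1) ≤ z a (.D k)) :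
    ∀ s ∈ Icc a (a + 1), y s (.D k) - y a (.D k) = 0 :=
  h.incr_eq_zero_of_le _ ha fun s hs => by
    rw [h.apply_eq_add_incr ha hs.1, Rmat.mulVec_D]
    simp only [thetaVec, Pi.sub_apply]
    linarith [hD s hs, h.incr_nonneg (.C k) ha hs.1]

theorem incr_E_eq_zero (ha : 0 ≤ a) (i : Fin m) (b c : Bool)
    (hE : ∀ s ∈ Icc a (a + 1), (bnum b + bnum c) * (y s (.A 0) - y a (.A 0))
      + (y s (.A 2) - y a (.A 2)) + (y s (.B i) - y a (.B i))
      - (2 * bnum b - 1) * (y s (.C 0) - y a (.C 0))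
      - (2 * bnum c - 1) * (y s (.C 1) - y a (.C 1)) ≤ z a (.E i b c)) :
    ∀ s ∈ Icc a (a + 1), y s (.E i b c) - y a (.E i b c) = 0 :=
  h.incr_eq_zero_of_le _ ha fun s hs => by
    rw [h.apply_eq_add_incr ha hs.1, Rmat.mulVec_E]
    simp only [thetaVec, Pi.sub_apply]
    linarith [hE s hs, h.incr_nonneg (.F i b c) ha hs.1]

theorem incr_F_eq_zero (ha : 0 ≤ a) (i : Fin m) (b c : Bool)
    (hF : ∀ s ∈ Icc a (a + 1), (bnum b + bnum c) * (y s (.A 0) - y a (.A 0))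
      + (y s (.A 2) - y a (.A 2)) + 4 * (y s (.A 3) - y a (.A 3)) + (y s (.B i) - y a (.B i))
      - (2 * bnum b - 1) * (y s (.C 0) - y a (.C 0))
      - (2 * bnum c - 1) * (y s (.C 1) - y a (.C 1)) ≤ z a (.F i b c)) :
    ∀ s ∈ Icc a (a + 1), y s (.F i b c) - y a (.F i b c) = 0 :=
  h.incr_eq_zero_of_le _ ha fun s hs => by
    rw [h.apply_eq_add_incr ha hs.1, Rmat.mulVec_F]
    simp only [thetaVec, Pi.sub_apply]
    linarith [hF s hs, h.incr_nonneg (.E i b c) ha hs.1, h.incr_nonneg (.A 4) ha hs.1]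

theorem incr_B_le (ha : 0 ≤ a) (j : Fin m)
    (hA : ∀ s ∈ Icc a (a + 1), y s (.A 0) - y a (.A 0) ≤ s - a) :
    ∀ s ∈ Icc a (a + 1), y s (.B j) - y a (.B j) ≤ s - a :=
  h.incr_le_of_sub_le _ ha (by fun_prop) (fun _ _ _ _ h => by linarith) (by simp) fun s hs => by
    linarith [hA s hs, h.incr_B_sub_le ha hs.1 j, h.2.2.2.1 a ha (.B j)]

theorem incr_C_le (ha : 0 ≤ a) (k : Fin 2)
    (hA : ∀ s ∈ Icc a (a + 1), y s (.A 0) - y a (.A 0) + (y s (.A 3) - y a (.A 3)) ≤ s - a) :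
    ∀ s ∈ Icc a (a + 1), y s (.C k) - y a (.C k) ≤ s - a :=
  h.incr_le_of_sub_le _ ha (by fun_prop) (fun _ _ _ _ h => by linarith) (by simp) fun s hs => by
    linarith [hA s hs, h.incr_C_sub_le ha hs.1 k, h.2.2.2.1 a ha (.C k)]

theorem incr_E_F_eq_zero_phase0 (ha : 0 ≤ a) (hz : z a = encCfg i C₁ C₂) (i' : Fin m) (b c : Bool) :
    (∀ s ∈ Icc a (a + 1), y s (.E i' b c) - y a (.E i' b c) = 0) ∧
      ∀ s ∈ Icc a (a + 1), y s (.F i' b c) - y a (.F i' b c) = 0 := by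
  have hA := h.incr_A ha 0 fun l => by rw [hz, encCfg_A]
  have hB := h.incr_B_le ha i' fun s hs => by simp [hA s hs]
  have hC k := h.incr_C_le ha k fun s hs => by simp [hA s hs]
  have key : ∀ s ∈ Icc a (a + 1), (bnum b + bnum c) * (s - a) + (y s (.B i') - y a (.B i'))
      - (2 * bnum b - 1) * (y s (.C 0) - y a (.C 0))
      - (2 * bnum c - 1) * (y s (.C 1) - y a (.C 1)) ≤ 3 := fun s hs => by
    have := h.incr_nonneg (.C 0) ha hs.1
    have := h.incr_nonneg (.C 1) ha hs.1
    cases b <;> cases c <;> simp only [bnum_true, bnum_false] <;>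
      linarith [hs.2, hB s hs, hC 0 s hs, hC 1 s hs]
  constructor
  · refine h.incr_E_eq_zero ha i' b c fun s hs => ?_
    simp only [hA s hs, hz, encCfg]
    simpa using key s hs
  · refine h.incr_F_eq_zero ha i' b c fun s hs => ?_
    simp only [hA s hs, hz, encCfg]
    simp
    linarith [key s hs]

theorem incr_phase0 (ha : 0 ≤ a) (hz : z a = encCfg i C₁ C₂) :
    ∀ s ∈ Icc a (a + 1), y s - y a = (s - a) • rate0 i C₁ C₂ := by
  have hA := h.incr_A ha 0 fun l => by rw [hz, encCfg_A]
  have hE i' b c := (h.incr_E_F_eq_zero_phase0 ha hz i' b c).1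
  have hF i' b c := (h.incr_E_F_eq_zero_phase0 ha hz i' b c).2
  have hD k := h.incr_D_eq_zero ha k fun s hs => by simp [hA s hs, hz, encCfg]
  have hB j : ∀ s ∈ Icc a (a + 1), y s (.B j) - y a (.B j) = (s - a) * indC (j = i) := by
    by_cases hj : j = i
    · subst hj
      refine fun s hs => (h.incr_eq_mul_of_eq _ ha zero_le_one (fun s hs => ?_) s hs).trans
        (by simp)
      rw [h.apply_eq_add_incr ha hs.1, Rmat.mulVec_B]
      simp [hA s hs, hE _ _ _ s hs, hz, encCfg, thetaVec]
      ring
    · intro s hs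
      rw [h.incr_B_eq_zero ha j (fun s hs => by simp [hA s hs, hz, encCfg, hj]; linarith [hs.2])
        s hs, indC, if_neg hj, mul_zero]
  have hC k : ∀ s ∈ Icc a (a + 1),
      y s (.C k) - y a (.C k) = (s - a) * rate0 i C₁ C₂ (.C k) := by
    by_cases hk : encCfg i C₁ C₂ (.C k) = 0
    · have hr : rate0 i C₁ C₂ (.C k) = 1 := by fin_cases k <;> simp_all [encCfg, rate0, indC]
      refine fun s hs => (h.incr_eq_mul_of_eq _ ha zero_le_one (fun s hs => ?_) s hs).trans
        (by simp [hr])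
      rw [h.apply_eq_add_incr ha hs.1, Rmat.mulVec_C]
      simp [hA s hs, hE _ _ _ s hs, hD k s hs, hz, hk, thetaVec]
      ring
    · have hr : rate0 i C₁ C₂ (.C k) = 0 := by fin_cases k <;> simp_all [encCfg, rate0, indC]
      have hk1 : 1 ≤ encCfg i C₁ C₂ (.C k) := by
        fin_cases k <;> simp [encCfg] at hk ⊢ <;> exact_mod_cast Nat.one_le_iff_ne_zero.2 hk
      intro s hs
      rw [h.incr_C_eq_zero ha k (fun s hs => by simp [hA s hs, hz]; linarith [hs.2]) s hs,
        hr, mul_zero]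
  intro s hs
  funext p
  cases p with
  | A l => simpa [rate0] using hA s hs l
  | B j => simpa [rate0] using hB j s hs
  | C k => simpa using hC k s hs
  | D k => simpa [rate0] using hD k s hs
  | E i' b c => simpa [rate0] using hE i' b c s hs
  | F i' b c => simpa [rate0] using hF i' b c s hs

theorem incr_phase1 (ha : 0 ≤ a) (hz : z a = profile1 i C₁ C₂) :
    ∀ s ∈ Icc a (a + 1), y s - y a = (s - a) • rate1 C₁ C₂ := by
  have hA := h.incr_A ha 1 fun l => by rw [hz]; rfl
  have hB j := h.incr_B_eq_zero ha j fun s hs => by simp [hA s hs, hz, profile1]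
  have hC k := h.incr_C_eq_zero ha k fun s hs => by
    fin_cases k <;> simp [hA s hs, hz, profile1, natCast_sub_one_add_indC_nonneg]
  have hE i' b c := h.incr_E_eq_zero ha i' b c fun s hs => by
    simp [hA s hs, hB i' s hs, hC 0 s hs, hC 1 s hs, hz, profile1]
    linarith [neg_three_le_upsilon i C₁ C₂ i' b c]
  have hF i' b c := h.incr_F_eq_zero ha i' b c fun s hs => by
    simp [hA s hs, hB i' s hs, hC 0 s hs, hC 1 s hs, hz, profile1]
    linarith [neg_three_le_upsilon i C₁ C₂ i' b c]
  have hD k : ∀ s ∈ Icc a (a + 1),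
      y s (.D k) - y a (.D k) = (s - a) * rate1 (m := m) C₁ C₂ (.D k) := by
    have hr : rate1 (m := m) C₁ C₂ (.D k) = 1 - z a (.D k) := by rw [hz]; fin_cases k <;> rfl
    have hz01 : z a (.D k) = 0 ∨ z a (.D k) = 1 := by
      rw [hz]; fin_cases k <;> simp only [profile1, indC] <;> split_ifs <;> simp
    rcases hz01 with hz0 | hz1
    · refine fun s hs => (h.incr_eq_mul_of_eq _ ha zero_le_one (fun s hs => ?_) s hs).trans
        (by simp [hr, hz0])
      rw [h.apply_eq_add_incr ha hs.1, Rmat.mulVec_D]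
      simp [hA s hs, hC k s hs, hz0, thetaVec]
      ring
    · intro s hs
      rw [h.incr_D_eq_zero ha k (fun s hs => by simp [hA s hs, hz1]; linarith [hs.2]) s hs,
        hr, hz1, sub_self, mul_zero]
  intro s hs
  funext p
  cases p with
  | A l => simpa [rate1] using hA s hs l
  | B j => simpa [rate1] using hB j s hs
  | C k => simpa [rate1] using hC k s hs
  | D k => simpa using hD k s hs
  | E i' b c => simpa [rate1] using hE i' b c s hs
  | F i' b c => simpa [rate1] using hF i' b c s hs

theorem incr_phase2 (ha : 0 ≤ a) (hz : z a = profile2 i C₁ C₂) :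
    ∀ s ∈ Icc a (a + 1), y s - y a = (s - a) • rate2 i C₁ C₂ := by
  have hA := h.incr_A ha 2 fun l => by rw [hz]; rfl
  have hB j := h.incr_B_eq_zero ha j fun s hs => by simp [hA s hs, hz, profile2]
  have hC k := h.incr_C_eq_zero ha k fun s hs => by fin_cases k <;> simp [hA s hs, hz, profile2]
  have hD k := h.incr_D_eq_zero ha k fun s hs => by simp [hA s hs, hz, profile2]
  have hF i' b c := h.incr_F_eq_zero ha i' b c fun s hs => by
    simp [hA s hs, hB i' s hs, hC 0 s hs, hC 1 s hs, hz, profile2]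
    linarith [hs.2, neg_three_le_upsilon i C₁ C₂ i' b c]
  have hE i' b c : ∀ s ∈ Icc a (a + 1),
      y s (.E i' b c) - y a (.E i' b c) = (s - a) * rate2 i C₁ C₂ (.E i' b c) := by
    by_cases hx : (i', b, c) = (i, decide (0 < C₁), decide (0 < C₂))
    · simp only [Prod.mk.injEq] at hx
      obtain ⟨rfl, rfl, rfl⟩ := hx
      refine fun s hs => (h.incr_eq_mul_of_eq _ ha zero_le_one (fun s hs => ?_) s hs).trans
        (by simp [rate2])
      rw [h.apply_eq_add_incr ha hs.1, Rmat.mulVec_E]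
      simp [hA s hs, hB _ s hs, hC 0 s hs, hC 1 s hs, hF _ _ _ s hs, hz, profile2, thetaVec,
        upsilon_self]
      ring
    · intro s hs
      rw [h.incr_E_eq_zero ha i' b c (fun s hs => by
          simp [hA s hs, hB i' s hs, hC 0 s hs, hC 1 s hs, hz, profile2]
          linarith [hs.2, neg_two_le_upsilon_of_ne hx]) s hs]
      simp [rate2, indC, hx]
  intro s hs
  funext p
  cases p with
  | A l => simpa [rate2] using hA s hs l
  | B j => simpa [rate2] using hB j s hs
  | C k => simpa [rate2] using hC k s hs
  | D k => simpa [rate2] using hD k s hs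
  | E i' b c => simpa using hE i' b c s hs
  | F i' b c => simpa [rate2] using hF i' b c s hs

theorem incr_phase3 (ha : 0 ≤ a) (hz : z a = profile3 M i C₁ C₂) :
    ∀ s ∈ Icc a (a + 1), y s - y a = incr3 i C₁ C₂ (s - a) := by
  have hA := h.incr_A ha 3 fun l => by rw [hz]; rfl
  have hB j := h.incr_B_eq_zero ha j fun s hs => by
    simp only [hA s hs, hz, profile3]
    split_ifs <;> simp
  have hC k := h.incr_C_eq_zero ha k fun s hs => by
    simp [hA s hs, hz, profile3]
    linarith [hs.2, M.counter_add_delta_nonneg i C₁ C₂ k]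
  have hD k := h.incr_D_eq_zero ha k fun s hs => by simp [hA s hs, hz, profile3]
  have hE i' b c := h.incr_E_eq_zero ha i' b c fun s hs => by
    simp [hA s hs, hB i' s hs, hC 0 s hs, hC 1 s hs, hz, profile3]
    linarith [one_le_slackF i C₁ C₂ i' b c]
  have hF i' b c := h.incr_eq_max_of_eq (.F i' b c) (b := a + 1)
    (w := slackF i C₁ C₂ i' b c) ha zero_le_four fun s hs => by
      rw [h.apply_eq_add_incr ha hs.1, Rmat.mulVec_F]
      simp [hA s hs, hB i' s hs, hC 0 s hs, hC 1 s hs, hE i' b c s hs, hz, profile3, thetaVec]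
      ring
  intro s hs
  funext p
  cases p with
  | A l => simpa [incr3] using hA s hs l
  | B j => simpa [incr3] using hB j s hs
  | C k => simpa [incr3] using hC k s hs
  | D k => simpa [incr3] using hD k s hs
  | E i' b c => simpa [incr3] using hE i' b c s hs
  | F i' b c => simpa [incr3] using hF i' b c s hs

theorem apply_add_one_eq_profile1 (ha : 0 ≤ a) (hz : z a = encCfg i C₁ C₂) :
    z (a + 1) = profile1 i C₁ C₂ := by
  rw [h.apply_add_one ha, hz, h.incr_phase0 ha hz (a + 1) ⟨by linarith, le_rfl⟩,
    add_sub_cancel_left, one_smul, encCfg_add_rate0]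

theorem apply_add_one_eq_profile2 (ha : 0 ≤ a) (hz : z a = profile1 i C₁ C₂) :
    z (a + 1) = profile2 i C₁ C₂ := by
  rw [h.apply_add_one ha, hz, h.incr_phase1 ha hz (a + 1) ⟨by linarith, le_rfl⟩,
    add_sub_cancel_left, one_smul, profile1_add_rate1]

theorem apply_add_one_eq_profile3 (ha : 0 ≤ a) (hz : z a = profile2 i C₁ C₂) :
    z (a + 1) = profile3 M i C₁ C₂ := by
  rw [h.apply_add_one ha, hz, h.incr_phase2 ha hz (a + 1) ⟨by linarith, le_rfl⟩,
    add_sub_cancel_left, one_smul, profile2_add_rate2]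

theorem apply_add_three_eq_profile3 (ha : 0 ≤ a) (hz : z a = encCfg i C₁ C₂) :
    z (a + 3) = profile3 M i C₁ C₂ := by
  have h1 := h.apply_add_one_eq_profile1 ha hz
  have h2 := h.apply_add_one_eq_profile2 (by linarith) h1
  have h3 := h.apply_add_one_eq_profile3 (by linarith) h2
  rwa [show a + 1 + 1 + 1 = a + 3 by ring] at h3

theorem apply_add_one_eq_profile4 (ha : 0 ≤ a) (hz : z a = profile3 M i C₁ C₂) :
    z (a + 1) = profile4 M i C₁ C₂ := by
  rw [h.apply_add_one ha, hz, h.incr_phase3 ha hz (a + 1) ⟨by linarith, le_rfl⟩,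
    add_sub_cancel_left, profile3_add_incr3]

end IsSkorokhodSolution

theorem dynamics_interval_3_general {m : ℕ} (M : CounterMachine m)
    (i0 : Fin m) (C₁0 C₂0 : ℕ) (y z : ℝ → Idx m → ℝ)
    (h : IsSkorokhodSolution (Rmat M) (fluidX i0 C₁0 C₂0) y z)
    (t : ℕ) (i : Fin m) (C₁ C₂ : ℕ)
    (hz : z (5 * (t : ℝ)) = encCfg i C₁ C₂)
    (bstar cstar : Bool) (hb : bstar = decide (0 < C₁)) (hc : cstar = decide (0 < C₂))
    (i' : Fin m) (Δ₁ Δ₂ : ℤ) (hΓ : M.Γ i bstar cstar = (i', Δ₁, Δ₂)) :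
    (UnitActive (fun s => y s (.A 3)) (5 * (t : ℝ) + 3) (5 * (t : ℝ) + 4)) ∧
    (∀ (i'' : Fin m) (b c : Bool),
      Passive (fun s => y s (.F i'' b c)) (5 * (t : ℝ) + 3)
        (5 * (t : ℝ) + 3 +
          (3 + Upsilon i C₁ C₂ i'' b c + indC ((i'', b, c) = (i, bstar, cstar))) / 4) ∧
      ActiveAtRate (fun s => y s (.F i'' b c)) 4
        (5 * (t : ℝ) + 3 +
          (3 + Upsilon i C₁ C₂ i'' b c + indC ((i'', b, c) = (i, bstar, cstar))) / 4)
        (5 * (t : ℝ) + 4)) ∧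
    (∀ k : Fin 5, k ≠ 3 →
      Passive (fun s => y s (.A k)) (5 * (t : ℝ) + 3) (5 * (t : ℝ) + 4)) ∧
    (∀ j : Fin m, Passive (fun s => y s (.B j)) (5 * (t : ℝ) + 3) (5 * (t : ℝ) + 4)) ∧
    (∀ k : Fin 2, Passive (fun s => y s (.C k)) (5 * (t : ℝ) + 3) (5 * (t : ℝ) + 4)) ∧
    (∀ k : Fin 2, Passive (fun s => y s (.D k)) (5 * (t : ℝ) + 3) (5 * (t : ℝ) + 4)) ∧
    (∀ (i'' : Fin m) (b c : Bool),
      Passive (fun s => y s (.E i'' b c)) (5 * (t : ℝ) + 3) (5 * (t : ℝ) + 4)) ∧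
    (z (5 * (t : ℝ) + 4) (.A 0) = 1 ∧ z (5 * (t : ℝ) + 4) (.A 1) = 1 ∧
      z (5 * (t : ℝ) + 4) (.A 2) = 1 ∧ z (5 * (t : ℝ) + 4) (.A 3) = 0 ∧
      z (5 * (t : ℝ) + 4) (.A 4) = 0) ∧
    (z (5 * (t : ℝ) + 4) (.B i') = 0) ∧
    (∀ j : Fin m, j ≠ i' → z (5 * (t : ℝ) + 4) (.B j) = 1) ∧
    (z (5 * (t : ℝ) + 4) (.C 0) = (C₁ : ℝ) + (Δ₁ : ℝ)) ∧
    (z (5 * (t : ℝ) + 4) (.C 1) = (C₂ : ℝ) + (Δ₂ : ℝ)) ∧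
    (∀ k : Fin 2, z (5 * (t : ℝ) + 4) (.D k) = 0) ∧
    (∀ (i'' : Fin m) (b c : Bool), z (5 * (t : ℝ) + 4) (.E i'' b c) = 3) ∧
    (∀ (i'' : Fin m) (b c : Bool), z (5 * (t : ℝ) + 4) (.F i'' b c) = 0) := by
  subst hb hc
  set a : ℝ := 5 * (t : ℝ)
  have ha : 0 ≤ a := by positivity
  have hz3 := h.apply_add_three_eq_profile3 ha hz
  have hz4 : z (a + 4) = profile4 M i C₁ C₂ := by
    rw [show a + 4 = a + 3 + 1 by ring]
    exact h.apply_add_one_eq_profile4 (by positivity) hz3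
  have hy : ∀ s ∈ Icc (a + 3) (a + 4), ∀ p,
      y s p - y (a + 3) p = incr3 i C₁ C₂ (s - (a + 3)) p :=
    fun s hs p => congrFun (h.incr_phase3 (by positivity) hz3 s (by convert hs using 2; ring)) p
  have passive p (hp : ∀ ν, incr3 i C₁ C₂ ν p = 0) : Passive (fun s => y s p) (a + 3) (a + 4) :=
    fun s hs => sub_eq_zero.1 ((hy s (Ioo_subset_Icc_self hs) p).trans (hp _))
  have hF i'' b c := passive_and_activeAtRate_of_eq_max zero_lt_four
    (w := slackF i C₁ C₂ i'' b c) (by linarith [one_le_slackF i C₁ C₂ i'' b c])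
    (by linarith [slackF_le_three i C₁ C₂ i'' b c])
    fun s hs => hy s hs (.F i'' b c)
  refine ⟨fun s hs => by simpa [incr3] using hy s (Ioo_subset_Icc_self hs) (.A 3), hF,
    fun k hk => passive _ fun ν => by simp [incr3, hk],
    fun j => passive _ fun _ => rfl, fun k => passive _ fun _ => rfl,
    fun k => passive _ fun _ => rfl, fun i'' b c => passive _ fun _ => rfl, ?_⟩
  simp +decide [hz4, profile4, clockState, CounterMachine.delta, hΓ]
  exact fun j => Ne.symm

/-- Dynamics over the interval `(5t+3, 5t+4)`: `y_{A,4}` is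
active at unit rate; each `y_{F,(i″,b,c)}` is passive on `(5t+3, 5t+3+q)` and
active at rate 4 on `(5t+3+q, 5t+4)` where
`q = (3 + Υ(i″,b,c) + 1{(i″,b,c)=(i,b*,c*)})/4`; all other `y`-coordinates are
passive; and the state `z(5t+4)` is as indicated. -/
theorem dynamics_interval_3 {m : ℕ} (M : CounterMachine m)
    (i0 : Fin m) (C₁0 C₂0 : ℕ) (y z : ℝ → Idx m → ℝ)
    (h : IsSkorokhodSolution (Rmat M) (fluidX i0 C₁0 C₂0) y z)
    (t : ℕ) (i : Fin m) (C₁ C₂ : ℕ)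
    (htraj : (M.step)^[t] (i0, C₁0, C₂0) = (i, C₁, C₂))
    (hz : z (5 * (t : ℝ)) = encCfg i C₁ C₂)
    (bstar cstar : Bool) (hb : bstar = decide (0 < C₁)) (hc : cstar = decide (0 < C₂))
    (i' : Fin m) (Δ₁ Δ₂ : ℤ) (hΓ : M.Γ i bstar cstar = (i', Δ₁, Δ₂)) :
    (UnitActive (fun s => y s (.A 3)) (5 * (t : ℝ) + 3) (5 * (t : ℝ) + 4)) ∧
    (∀ (i'' : Fin m) (b c : Bool),
      Passive (fun s => y s (.F i'' b c)) (5 * (t : ℝ) + 3)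
        (5 * (t : ℝ) + 3 +
          (3 + Upsilon i C₁ C₂ i'' b c + indC ((i'', b, c) = (i, bstar, cstar))) / 4) ∧
      ActiveAtRate (fun s => y s (.F i'' b c)) 4
        (5 * (t : ℝ) + 3 +
          (3 + Upsilon i C₁ C₂ i'' b c + indC ((i'', b, c) = (i, bstar, cstar))) / 4)
        (5 * (t : ℝ) + 4)) ∧
    (∀ k : Fin 5, k ≠ 3 →
      Passive (fun s => y s (.A k)) (5 * (t : ℝ) + 3) (5 * (t : ℝ) + 4)) ∧
    (∀ j : Fin m, Passive (fun s => y s (.B j)) (5 * (t : ℝ) + 3) (5 * (t : ℝ) + 4)) ∧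
    (∀ k : Fin 2, Passive (fun s => y s (.C k)) (5 * (t : ℝ) + 3) (5 * (t : ℝ) + 4)) ∧
    (∀ k : Fin 2, Passive (fun s => y s (.D k)) (5 * (t : ℝ) + 3) (5 * (t : ℝ) + 4)) ∧
    (∀ (i'' : Fin m) (b c : Bool),
      Passive (fun s => y s (.E i'' b c)) (5 * (t : ℝ) + 3) (5 * (t : ℝ) + 4)) ∧
    (z (5 * (t : ℝ) + 4) (.A 0) = 1 ∧ z (5 * (t : ℝ) + 4) (.A 1) = 1 ∧
      z (5 * (t : ℝ) + 4) (.A 2) = 1 ∧ z (5 * (t : ℝ) + 4) (.A 3) = 0 ∧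
      z (5 * (t : ℝ) + 4) (.A 4) = 0) ∧
    (z (5 * (t : ℝ) + 4) (.B i') = 0) ∧
    (∀ j : Fin m, j ≠ i' → z (5 * (t : ℝ) + 4) (.B j) = 1) ∧
    (z (5 * (t : ℝ) + 4) (.C 0) = (C₁ : ℝ) + (Δ₁ : ℝ)) ∧
    (z (5 * (t : ℝ) + 4) (.C 1) = (C₂ : ℝ) + (Δ₂ : ℝ)) ∧
    (∀ k : Fin 2, z (5 * (t : ℝ) + 4) (.D k) = 0) ∧
    (∀ (i'' : Fin m) (b c : Bool), z (5 * (t : ℝ) + 4) (.E i'' b c) = 3) ∧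
    (∀ (i'' : Fin m) (b c : Bool), z (5 * (t : ℝ) + 4) (.F i'' b c) = 0) :=
  dynamics_interval_3_general M i0 C₁0 C₂0 y z h t i C₁ C₂ hz bstar cstar hb hc i' Δ₁ Δ₂ hΓ
end
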